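/- arXiv:2203.07958 — 13 statements merged into one kernel-verified Lean document; each statement's English description precedes it below -/
import Mathlib

section
/- Let l ≥ 4 and 1 ≤ k ≤ l−3 be integers. Let V be a real inner product space and let τ₁, …, τ_{l−1}, τ̄_{k+1} ∈ V satisfy: ⟪τ_i,τ_i⟫ = 2 for all i and ⟪τ̄_{k+1},τ̄_{k+1}⟫ = 2; ⟪τ_i,τ_{i+1}⟫ = −1 for 1 ≤ i ≤ l−2 and ⟪τ_i,τ_j⟫ = 0 for |i−j| ≥ 2; ⟪τ_k,τ̄_{k+1}⟫ = −1, ⟪τ_{k+2},τ̄_{k+1}⟫ = 1, and ⟪τ_i,τ̄_{k+1}⟫ = 0 for i ∉ {k, k+2} (the Gram relations of the Carter diagram D_l(a_k)). Set β_{k+1} := −(τ₁ + 2·(τ₂ + ⋯ + τ_k) + τ_{k+1} + τ̄_{k+1}). Then ⟪β_{k+1},β_{k+1}⟫ = 2, ⟪β_{k+1},τ₂⟫ = −1, and ⟪β_{k+1},τ_i⟫ = 0 for every i ∈ {1,…,l−1} with i ≠ 2 (the Gram relations of the Dynkin diagram D_l). -/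
/-!
Write `σ_I = ∑_{i ∈ I} τ_i` for an interval `I` of the chain. By telescoping, `⟪σ_I, τ_j⟫` only
sees the ends of `I`: it is `2[j ∈ I] - [j - 1 ∈ I] - [j + 1 ∈ I]`. Since
`β_{k+1} = -(σ_{[1,k+1]} + σ_{[2,k]} + τ̄_{k+1})`, the end contributions of the two intervals and
of `τ̄_{k+1}` (which meets `τ_k` and `τ_{k+2}`) cancel against each other except at `j = 2`.
Expanding `β_{k+1}` once more then gives `⟪β_{k+1}, β_{k+1}⟫ = 2`.
-/

open scoped RealInnerProductSpace

open Finset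

section

variable {V : Type*} [NormedAddCommGroup V] [InnerProductSpace ℝ V]

/-- Entries of the Cartan matrix of the chain `A_n`; indices start at `1`, so the truncated
`j - 1` never matters. -/
def cartanA (i j : ℕ) : ℝ :=
  (if i = j then 2 else 0) - (if i = j - 1 then 1 else 0) - (if i = j + 1 then 1 else 0)

theorem inner_eq_cartanA_of_chain {n : ℕ} {τ : ℕ → V}
    (hnorm : ∀ i, 1 ≤ i → i ≤ n → ⟪τ i, τ i⟫ = 2)
    (hadj : ∀ i, 1 ≤ i → i + 1 ≤ n → ⟪τ i, τ (i + 1)⟫ = -1)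
    (hfar : ∀ i j, 1 ≤ i → i ≤ n → 1 ≤ j → j ≤ n → (i + 2 ≤ j ∨ j + 2 ≤ i) → ⟪τ i, τ j⟫ = 0)
    {i j : ℕ} (hi : i ∈ Icc 1 n) (hj : j ∈ Icc 1 n) :
    ⟪τ i, τ j⟫ = cartanA i j := by
  rw [mem_Icc] at hi hj
  unfold cartanA
  obtain rfl | hij := eq_or_ne i j
  · rw [hnorm i hi.1 hi.2, if_pos rfl, if_neg (by omega), if_neg (by omega)]
    norm_num
  obtain rfl | hij₁ := eq_or_ne j (i + 1)
  · rw [hadj i hi.1 hj.2, if_neg hij, if_pos (by omega), if_neg (by omega)]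
    norm_num
  obtain rfl | hij₂ := eq_or_ne i (j + 1)
  · rw [real_inner_comm, hadj j hj.1 hi.2, if_neg hij, if_neg (by omega), if_pos rfl]
    norm_num
  rw [hfar i j hi.1 hi.2 hj.1 hj.2 (by omega), if_neg hij, if_neg (by omega), if_neg hij₂]
  norm_num

theorem inner_sum_eq_of_cartanA {I : Finset ℕ} {τ : ℕ → V} {j : ℕ}
    (hchain : ∀ i ∈ I, ⟪τ i, τ j⟫ = cartanA i j) :
    ⟪∑ i ∈ I, τ i, τ j⟫ = (if j ∈ I then 2 else 0) - (if j - 1 ∈ I then 1 else 0)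
      - (if j + 1 ∈ I then 1 else 0) := by
  rw [sum_inner, sum_congr rfl hchain]
  simp only [cartanA, sum_sub_distrib, sum_ite_eq']

theorem inner_sum_eq_of_indicator {I : Finset ℕ} {τ : ℕ → V} {x : V} {a b : ℕ}
    (h : ∀ i ∈ I, ⟪τ i, x⟫ = (if i = a then 1 else 0) - (if i = b then 1 else 0)) :
    ⟪∑ i ∈ I, τ i, x⟫ = (if a ∈ I then 1 else 0) - (if b ∈ I then 1 else 0) := by
  rw [sum_inner, sum_congr rfl h, sum_sub_distrib, sum_ite_eq', sum_ite_eq']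

/-- The root `β_{k+1} = -(τ₁ + 2(τ₂ + ⋯ + τ_k) + τ_{k+1} + τ̄_{k+1})` of the transition map,
split into the two chain sums over `[1, k+1]` and `[2, k]` (see `minimalRoot_eq`). -/
def minimalRoot (k : ℕ) (τ : ℕ → V) (τb : V) : V :=
  -(∑ i ∈ Icc 1 (k + 1), τ i + ∑ i ∈ Icc 2 k, τ i + τb)

theorem minimalRoot_eq {k : ℕ} (hk : 1 ≤ k) (τ : ℕ → V) (τb : V) :
    minimalRoot k τ τb = -(τ 1 + (2 : ℝ) • ∑ i ∈ Icc 2 k, τ i + τ (k + 1) + τb) := by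
  have hIoc : Ioc 1 k = Icc 2 k := (Icc_add_one_left_eq_Ioc 1 k).symm
  rw [minimalRoot, sum_Icc_succ_top (by omega), ← sum_Ioc_add_eq_sum_Icc hk, hIoc, two_smul]
  abel

variable {n k : ℕ} {τ : ℕ → V} {τb : V}

theorem inner_minimalRoot_tau (hk : 1 ≤ k) (hkn : k + 2 ≤ n)
    (hchain : ∀ i ∈ Icc 1 n, ∀ j ∈ Icc 1 n, ⟪τ i, τ j⟫ = cartanA i j)
    (hτb : ∀ i ∈ Icc 1 n, ⟪τ i, τb⟫ = (if i = k + 2 then 1 else 0) - (if i = k then 1 else 0))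
    {j : ℕ} (hj : j ∈ Icc 1 n) :
    ⟪minimalRoot k τ τb, τ j⟫ = -(if j = 2 then 1 else 0) := by
  rw [minimalRoot, inner_neg_left, inner_add_left, inner_add_left,
    inner_sum_eq_of_cartanA fun i hi => hchain i (Icc_subset_Icc le_rfl (by omega) hi) j hj,
    inner_sum_eq_of_cartanA fun i hi => hchain i (Icc_subset_Icc one_le_two (by omega) hi) j hj,
    real_inner_comm, hτb j hj]
  simp only [mem_Icc] at hj ⊢
  split_ifs <;> first | omega | norm_num

theorem inner_minimalRoot_tauBar (hk : 1 ≤ k) (hkn : k + 2 ≤ n)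
    (hτb : ∀ i ∈ Icc 1 n, ⟪τ i, τb⟫ = (if i = k + 2 then 1 else 0) - (if i = k then 1 else 0))
    (hτbτb : ⟪τb, τb⟫ = 2) :
    ⟪minimalRoot k τ τb, τb⟫ = -(if k = 1 then 1 else 0) := by
  rw [minimalRoot, inner_neg_left, inner_add_left, inner_add_left,
    inner_sum_eq_of_indicator fun i hi => hτb i (Icc_subset_Icc le_rfl (by omega) hi),
    inner_sum_eq_of_indicator fun i hi => hτb i (Icc_subset_Icc one_le_two (by omega) hi), hτbτb]
  simp only [mem_Icc]
  split_ifs <;> first | omega | norm_num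

theorem inner_minimalRoot_self (hk : 1 ≤ k) (hkn : k + 2 ≤ n)
    (hchain : ∀ i ∈ Icc 1 n, ∀ j ∈ Icc 1 n, ⟪τ i, τ j⟫ = cartanA i j)
    (hτb : ∀ i ∈ Icc 1 n, ⟪τ i, τb⟫ = (if i = k + 2 then 1 else 0) - (if i = k then 1 else 0))
    (hτbτb : ⟪τb, τb⟫ = 2) :
    ⟪minimalRoot k τ τb, minimalRoot k τ τb⟫ = 2 := by
  set β := minimalRoot k τ τb
  have hβσ : ∀ {a b : ℕ}, 1 ≤ a → b ≤ n →
      ⟪β, ∑ i ∈ Icc a b, τ i⟫ = -(if 2 ∈ Icc a b then 1 else 0) := fun ha hb => by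
    rw [inner_sum, sum_congr rfl fun i hi =>
      inner_minimalRoot_tau hk hkn hchain hτb (Icc_subset_Icc ha hb hi), sum_neg_distrib,
      sum_ite_eq']
  calc ⟪β, β⟫ = ⟪β, -(∑ i ∈ Icc 1 (k + 1), τ i + ∑ i ∈ Icc 2 k, τ i + τb)⟫ := rfl
    _ = 2 := by
      rw [inner_neg_right, inner_add_right, inner_add_right, hβσ le_rfl (by omega),
        hβσ one_le_two (by omega), inner_minimalRoot_tauBar hk hkn hτb hτbτb]
      simp only [mem_Icc]
      split_ifs <;> first | omega | norm_num

end

theorem stmt1_general {V : Type*} [NormedAddCommGroup V] [InnerProductSpace ℝ V]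
    (l k : ℕ) (hk1 : 1 ≤ k) (hk2 : k ≤ l - 3)
    (τ : ℕ → V) (τb : V)
    (hnorm : ∀ i, 1 ≤ i → i ≤ l - 1 → ⟪τ i, τ i⟫ = 2)
    (hbnorm : ⟪τb, τb⟫ = 2)
    (hadj : ∀ i, 1 ≤ i → i ≤ l - 2 → ⟪τ i, τ (i + 1)⟫ = -1)
    (hfar : ∀ i j, 1 ≤ i → i ≤ l - 1 → 1 ≤ j → j ≤ l - 1 →
      (i + 2 ≤ j ∨ j + 2 ≤ i) → ⟪τ i, τ j⟫ = 0)
    (hbk : ⟪τ k, τb⟫ = -1)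
    (hbk2 : ⟪τ (k + 2), τb⟫ = 1)
    (hb0 : ∀ i, 1 ≤ i → i ≤ l - 1 → i ≠ k → i ≠ k + 2 → ⟪τ i, τb⟫ = 0)
    (β : V)
    (hdef : β = -(τ 1 + (2 : ℝ) • ∑ i ∈ Finset.Icc 2 k, τ i + τ (k + 1) + τb)) :
    ⟪β, β⟫ = 2 ∧ ⟪β, τ 2⟫ = -1 ∧
    ∀ i, 1 ≤ i → i ≤ l - 1 → i ≠ 2 → ⟪β, τ i⟫ = 0 := by
  have hkn : k + 2 ≤ l - 1 := by omega
  have hchain : ∀ i ∈ Icc 1 (l - 1), ∀ j ∈ Icc 1 (l - 1), ⟪τ i, τ j⟫ = cartanA i j :=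
    fun i hi j hj => inner_eq_cartanA_of_chain hnorm (fun i hi _ => hadj i hi (by omega)) hfar hi hj
  have hτb : ∀ i ∈ Icc 1 (l - 1),
      ⟪τ i, τb⟫ = (if i = k + 2 then 1 else 0) - (if i = k then 1 else 0) := by
    intro i hi
    obtain rfl | hik := eq_or_ne i k
    · simp [hbk]
    obtain rfl | hik₂ := eq_or_ne i (k + 2)
    · simp [hbk2]
    rw [mem_Icc] at hi
    simp [hb0 i hi.1 hi.2 hik hik₂, hik, hik₂]
  rw [← minimalRoot_eq hk1] at hdef
  subst hdef
  have hβτ := fun j (hj : j ∈ Icc 1 (l - 1)) => inner_minimalRoot_tau hk1 hkn hchain hτb hj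
  refine ⟨inner_minimalRoot_self hk1 hkn hchain hτb hbnorm, ?_, fun i hi₁ hi₂ hi => ?_⟩
  · simpa using hβτ 2 (mem_Icc.2 ⟨by omega, by omega⟩)
  · simpa [hi] using hβτ i (mem_Icc.2 ⟨hi₁, hi₂⟩)

theorem stmt1 {V : Type*} [NormedAddCommGroup V] [InnerProductSpace ℝ V]
    (l k : ℕ) (hl : 4 ≤ l) (hk1 : 1 ≤ k) (hk2 : k ≤ l - 3)
    (τ : ℕ → V) (τb : V)
    (hnorm : ∀ i, 1 ≤ i → i ≤ l - 1 → ⟪τ i, τ i⟫ = 2)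
    (hbnorm : ⟪τb, τb⟫ = 2)
    (hadj : ∀ i, 1 ≤ i → i ≤ l - 2 → ⟪τ i, τ (i + 1)⟫ = -1)
    (hfar : ∀ i j, 1 ≤ i → i ≤ l - 1 → 1 ≤ j → j ≤ l - 1 →
      (i + 2 ≤ j ∨ j + 2 ≤ i) → ⟪τ i, τ j⟫ = 0)
    (hbk : ⟪τ k, τb⟫ = -1)
    (hbk2 : ⟪τ (k + 2), τb⟫ = 1)
    (hb0 : ∀ i, 1 ≤ i → i ≤ l - 1 → i ≠ k → i ≠ k + 2 → ⟪τ i, τb⟫ = 0)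
    (β : V)
    (hdef : β = -(τ 1 + (2 : ℝ) • ∑ i ∈ Finset.Icc 2 k, τ i + τ (k + 1) + τb)) :
    ⟪β, β⟫ = 2 ∧ ⟪β, τ 2⟫ = -1 ∧
    ∀ i, 1 ≤ i → i ≤ l - 1 → i ≠ 2 → ⟪β, τ i⟫ = 0 :=
  stmt1_general l k hk1 hk2 τ τb hnorm hbnorm hadj hfar hbk hbk2 hb0 β hdef
end

section
/- Let V be a real inner product space and let α₁, α₂, α₃, β₁, β₂, β̄₃ ∈ V satisfy: ⟪τ,τ⟫ = 2 for each of these vectors; ⟪α₁,β₁⟫ = −1, ⟪β₁,α₃⟫ = −1, ⟪α₃,β̄₃⟫ = −1, ⟪α₁,α₃⟫ = ⟪α₁,β̄₃⟫ = ⟪β₁,β̄₃⟫ = 0; ⟪α₂,β₁⟫ = −1, ⟪α₂,β̄₃⟫ = 1, ⟪α₂,α₁⟫ = ⟪α₂,α₃⟫ = 0; and β₂ is orthogonal to each of α₁, β₁, α₃, β̄₃ (the Gram relations of the Carter diagram E₆(a₁)). Set β₃ := −(α₁ + β₁ + α₃ + β̄₃). Then ⟪β₃,β₃⟫ = 2,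 ⟪β₃,α₁⟫ = −1, and β₃ is orthogonal to each of α₂, α₃, β₁, β₂ (the Gram relations of the Dynkin diagram E₆). -/
/-! β₃ is minus the highest root α₁ + β₁ + α₃ + β̄₃ of the A₄ chain. Adding to a root `u`
a root `v` with `⟪u, v⟫ = -1` gives the root `s_v u = u + v` again, so the partial sums along
the chain all have norm 2. The remaining relations are linear in β₃ and are read off the Gram
matrix. -/

open scoped RealInnerProductSpace

section

variable {V : Type*} [NormedAddCommGroup V] [InnerProductSpace ℝ V]

lemma real_inner_self_add_eq_two {u v : V} (hu : ⟪u, u⟫ = 2) (hv : ⟪v, v⟫ = 2)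
    (huv : ⟪u, v⟫ = -1) : ⟪u + v, u + v⟫ = 2 := by
  rw [real_inner_add_add_self, hu, hv, huv]
  norm_num

lemma real_inner_self_chain_sum_eq_two {a b c d : V}
    (ha : ⟪a, a⟫ = 2) (hb : ⟪b, b⟫ = 2) (hc : ⟪c, c⟫ = 2) (hd : ⟪d, d⟫ = 2)
    (hab : ⟪a, b⟫ = -1) (hbc : ⟪b, c⟫ = -1) (hcd : ⟪c, d⟫ = -1)
    (hac : ⟪a, c⟫ = 0) (had : ⟪a, d⟫ = 0) (hbd : ⟪b, d⟫ = 0) :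
    ⟪a + b + c + d, a + b + c + d⟫ = 2 := by
  have h₂ : ⟪a + b, a + b⟫ = 2 := real_inner_self_add_eq_two ha hb hab
  have h₃ : ⟪a + b + c, a + b + c⟫ = 2 :=
    real_inner_self_add_eq_two h₂ hc (by rw [inner_add_left, hac, hbc]; norm_num)
  exact real_inner_self_add_eq_two h₃ hd
    (by rw [inner_add_left, inner_add_left, had, hbd, hcd]; norm_num)

lemma real_inner_neg_add_add_add_left (a b c d x : V) :
    ⟪-(a + b + c + d), x⟫ = -(⟪x, a⟫ + ⟪x, b⟫ + ⟪x, c⟫ + ⟪x, d⟫) := by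
  rw [real_inner_comm, inner_neg_right, inner_add_right, inner_add_right, inner_add_right]

end

theorem stmt2_general {V : Type*} [NormedAddCommGroup V] [InnerProductSpace ℝ V]
    (α₁ α₂ α₃ β₁ β₂ βb₃ : V)
    (h0 : ⟪α₁, α₁⟫ = 2)
    (h2 : ⟪α₃, α₃⟫ = 2)
    (h3 : ⟪β₁, β₁⟫ = 2)
    (h5 : ⟪βb₃, βb₃⟫ = 2)
    (h6 : ⟪α₁, β₁⟫ = -1)
    (h7 : ⟪β₁, α₃⟫ = -1)
    (h8 : ⟪α₃, βb₃⟫ = -1)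
    (h9 : ⟪α₁, α₃⟫ = 0)
    (h10 : ⟪α₁, βb₃⟫ = 0)
    (h11 : ⟪β₁, βb₃⟫ = 0)
    (h12 : ⟪α₂, β₁⟫ = -1)
    (h13 : ⟪α₂, βb₃⟫ = 1)
    (h14 : ⟪α₂, α₁⟫ = 0)
    (h15 : ⟪α₂, α₃⟫ = 0)
    (h16 : ⟪β₂, α₁⟫ = 0)
    (h17 : ⟪β₂, β₁⟫ = 0)
    (h18 : ⟪β₂, α₃⟫ = 0)
    (h19 : ⟪β₂, βb₃⟫ = 0)
    (β₃ : V) (hdef : β₃ = -(α₁ + β₁ + α₃ + βb₃)) :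
    ⟪β₃, β₃⟫ = 2 ∧
    ⟪β₃, α₁⟫ = -1 ∧
    ⟪β₃, α₂⟫ = 0 ∧
    ⟪β₃, α₃⟫ = 0 ∧
    ⟪β₃, β₁⟫ = 0 ∧
    ⟪β₃, β₂⟫ = 0 := by
  subst hdef
  refine ⟨?_, ?_, ?_, ?_, ?_, ?_⟩
  · rw [inner_neg_neg]
    exact real_inner_self_chain_sum_eq_two h0 h3 h2 h5 h6 h7 h8 h9 h10 h11
  all_goals rw [real_inner_neg_add_add_add_left]
  · rw [h0, h6, h9, h10]; norm_num
  · rw [h14, h12, h15, h13]; norm_num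
  · rw [real_inner_comm α₁ α₃, real_inner_comm β₁ α₃, h9, h7, h2, h8]; norm_num
  · rw [real_inner_comm α₁ β₁, h6, h3, h7, h11]; norm_num
  · rw [h16, h17, h18, h19]; norm_num

theorem stmt2 {V : Type*} [NormedAddCommGroup V] [InnerProductSpace ℝ V]
    (α₁ α₂ α₃ β₁ β₂ βb₃ : V)
    (h0 : ⟪α₁, α₁⟫ = 2)
    (h1 : ⟪α₂, α₂⟫ = 2)
    (h2 : ⟪α₃, α₃⟫ = 2)
    (h3 : ⟪β₁, β₁⟫ = 2)
    (h4 : ⟪β₂, β₂⟫ = 2)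
    (h5 : ⟪βb₃, βb₃⟫ = 2)
    (h6 : ⟪α₁, β₁⟫ = -1)
    (h7 : ⟪β₁, α₃⟫ = -1)
    (h8 : ⟪α₃, βb₃⟫ = -1)
    (h9 : ⟪α₁, α₃⟫ = 0)
    (h10 : ⟪α₁, βb₃⟫ = 0)
    (h11 : ⟪β₁, βb₃⟫ = 0)
    (h12 : ⟪α₂, β₁⟫ = -1)
    (h13 : ⟪α₂, βb₃⟫ = 1)
    (h14 : ⟪α₂, α₁⟫ = 0)
    (h15 : ⟪α₂, α₃⟫ = 0)
    (h16 : ⟪β₂, α₁⟫ = 0)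
    (h17 : ⟪β₂, β₁⟫ = 0)
    (h18 : ⟪β₂, α₃⟫ = 0)
    (h19 : ⟪β₂, βb₃⟫ = 0)
    (β₃ : V) (hdef : β₃ = -(α₁ + β₁ + α₃ + βb₃)) :
    ⟪β₃, β₃⟫ = 2 ∧
    ⟪β₃, α₁⟫ = -1 ∧
    ⟪β₃, α₂⟫ = 0 ∧
    ⟪β₃, α₃⟫ = 0 ∧
    ⟪β₃, β₁⟫ = 0 ∧
    ⟪β₃, β₂⟫ = 0 :=
  stmt2_general α₁ α₂ α₃ β₁ β₂ βb₃ h0 h2 h3 h5 h6 h7 h8 h9 h10 h11 h12 h13 h14 h15 h16 h17 h18 h19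
    β₃ hdef
end

section
/- Let V be a real inner product space and let α₁, α₂, ᾱ₃, β₁, β₂, β₃, β₄ ∈ V satisfy: ⟪β₂,β₂⟫ = ⟪α₂,α₂⟫ = ⟪β₃,β₃⟫ = ⟪ᾱ₃,ᾱ₃⟫ = 2; ⟪β₂,α₂⟫ = −1, ⟪α₂,β₃⟫ = −1, ⟪β₃,ᾱ₃⟫ = −1, ⟪β₂,β₃⟫ = ⟪β₂,ᾱ₃⟫ = ⟪α₂,ᾱ₃⟫ = 0; ⟪ᾱ₃,β₁⟫ + ⟪α₂,β₁⟫ = 0 and ⟪β₂,β₁⟫ = ⟪β₃,β₁⟫ = 0; and each of β₂, α₂, β₃, ᾱ₃ is orthogonal to α₁ and to β₄ (the relevant Gram relations of the Carter diagram E₇(a₁)). Set α₃ := −(β₂ + α₂ + β₃ + ᾱ₃). Then ⟪α₃,α₃⟫ = 2, ⟪α₃,β₂⟫ = −1, and α₃ is orthogonal to each of α₁, α₂, β₁, β₃, β₄ (the Gram relations of the Dynkin diagram E₇). -/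
open scoped RealInnerProductSpace

/-
The vectors β₂, α₂, β₃, ᾱ₃ form a simple system of type A₄ (a chain of four roots), whose highest
root is θ = β₂ + α₂ + β₃ + ᾱ₃. It satisfies ⟪θ, θ⟫ = 2 and pairs to 1 with the two end roots of
the chain and to 0 with the two middle ones; hence α₃ = -θ is joined to β₂ by a solid edge and is
orthogonal to α₂ and β₃. For x = α₁, β₁, β₄ the pairing ⟪α₃, x⟫ is minus the sum of the ⟪γ, x⟫
over the four chain roots γ, which vanishes by hypothesis.
-/

section

variable {V : Type*} [NormedAddCommGroup V] [InnerProductSpace ℝ V]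

lemma inner_add_add_add_left (a b c d x : V) :
    ⟪a + b + c + d, x⟫ = ⟪a, x⟫ + ⟪b, x⟫ + ⟪c, x⟫ + ⟪d, x⟫ := by
  simp only [inner_add_left]

lemma inner_highestRoot_chain_four (γ₁ γ₂ γ₃ γ₄ : V)
    (h₁₁ : ⟪γ₁, γ₁⟫ = 2) (h₂₂ : ⟪γ₂, γ₂⟫ = 2) (h₃₃ : ⟪γ₃, γ₃⟫ = 2) (h₄₄ : ⟪γ₄, γ₄⟫ = 2)
    (h₁₂ : ⟪γ₁, γ₂⟫ = -1) (h₂₃ : ⟪γ₂, γ₃⟫ = -1) (h₃₄ : ⟪γ₃, γ₄⟫ = -1)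
    (h₁₃ : ⟪γ₁, γ₃⟫ = 0) (h₁₄ : ⟪γ₁, γ₄⟫ = 0) (h₂₄ : ⟪γ₂, γ₄⟫ = 0) :
    ⟪γ₁ + γ₂ + γ₃ + γ₄, γ₁⟫ = 1 ∧ ⟪γ₁ + γ₂ + γ₃ + γ₄, γ₂⟫ = 0 ∧
      ⟪γ₁ + γ₂ + γ₃ + γ₄, γ₃⟫ = 0 ∧ ⟪γ₁ + γ₂ + γ₃ + γ₄, γ₄⟫ = 1 ∧
      ⟪γ₁ + γ₂ + γ₃ + γ₄, γ₁ + γ₂ + γ₃ + γ₄⟫ = 2 := by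
  have h₁ : ⟪γ₁ + γ₂ + γ₃ + γ₄, γ₁⟫ = 1 := by
    rw [inner_add_add_add_left, real_inner_comm γ₁ γ₂, real_inner_comm γ₁ γ₃,
      real_inner_comm γ₁ γ₄]
    linarith
  have h₂ : ⟪γ₁ + γ₂ + γ₃ + γ₄, γ₂⟫ = 0 := by
    rw [inner_add_add_add_left, real_inner_comm γ₂ γ₃, real_inner_comm γ₂ γ₄]
    linarith
  have h₃ : ⟪γ₁ + γ₂ + γ₃ + γ₄, γ₃⟫ = 0 := by
    rw [inner_add_add_add_left, real_inner_comm γ₃ γ₄]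
    linarith
  have h₄ : ⟪γ₁ + γ₂ + γ₃ + γ₄, γ₄⟫ = 1 := by
    rw [inner_add_add_add_left]
    linarith
  refine ⟨h₁, h₂, h₃, h₄, ?_⟩
  rw [inner_add_right, inner_add_right, inner_add_right, h₁, h₂, h₃, h₄]
  norm_num

end

theorem stmt4 {V : Type*} [NormedAddCommGroup V] [InnerProductSpace ℝ V]
    (α₁ α₂ αb₃ β₁ β₂ β₃ β₄ : V)
    (h0 : ⟪β₂, β₂⟫ = 2)
    (h1 : ⟪α₂, α₂⟫ = 2)
    (h2 : ⟪β₃, β₃⟫ = 2)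
    (h3 : ⟪αb₃, αb₃⟫ = 2)
    (h4 : ⟪β₂, α₂⟫ = -1)
    (h5 : ⟪α₂, β₃⟫ = -1)
    (h6 : ⟪β₃, αb₃⟫ = -1)
    (h7 : ⟪β₂, β₃⟫ = 0)
    (h8 : ⟪β₂, αb₃⟫ = 0)
    (h9 : ⟪α₂, αb₃⟫ = 0)
    (h10 : ⟪αb₃, β₁⟫ + ⟪α₂, β₁⟫ = 0)
    (h11 : ⟪β₂, β₁⟫ = 0)
    (h12 : ⟪β₃, β₁⟫ = 0)
    (h13 : ⟪β₂, α₁⟫ = 0)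
    (h14 : ⟪α₂, α₁⟫ = 0)
    (h15 : ⟪β₃, α₁⟫ = 0)
    (h16 : ⟪αb₃, α₁⟫ = 0)
    (h17 : ⟪β₂, β₄⟫ = 0)
    (h18 : ⟪α₂, β₄⟫ = 0)
    (h19 : ⟪β₃, β₄⟫ = 0)
    (h20 : ⟪αb₃, β₄⟫ = 0)
    (α₃ : V) (hdef : α₃ = -(β₂ + α₂ + β₃ + αb₃)) :
    ⟪α₃, α₃⟫ = 2 ∧
    ⟪α₃, β₂⟫ = -1 ∧
    ⟪α₃, α₁⟫ = 0 ∧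
    ⟪α₃, α₂⟫ = 0 ∧
    ⟪α₃, β₁⟫ = 0 ∧
    ⟪α₃, β₃⟫ = 0 ∧
    ⟪α₃, β₄⟫ = 0 := by
  obtain ⟨hθβ₂, hθα₂, hθβ₃, -, hθθ⟩ :=
    inner_highestRoot_chain_four β₂ α₂ β₃ αb₃ h0 h1 h2 h3 h4 h5 h6 h7 h8 h9
  subst hdef
  simp only [inner_neg_left, inner_neg_right, neg_neg, neg_eq_zero, hθθ, hθβ₂, hθα₂, hθβ₃,
    inner_add_add_add_left, h11, h12, h13, h14, h15, h16, h17, h18, h19, h20, add_zero, zero_add,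
    and_true, true_and]
  linarith
end

section
/- Let V be a real inner product space and let α₁, α₂, ᾱ₃, α₄, β₁, β₂, β₃ ∈ V satisfy: ⟪α₁,α₁⟫ = ⟪β₁,β₁⟫ = ⟪α₂,α₂⟫ = ⟪β₃,β₃⟫ = ⟪α₄,α₄⟫ = 2; ⟪α₁,β₁⟫ = −1, ⟪β₁,α₂⟫ = −1, ⟪α₂,β₃⟫ = −1, ⟪β₃,α₄⟫ = −1, and all other inner products among α₁, β₁, α₂, β₃, α₄ vanish; ⟪β₁,ᾱ₃⟫ + ⟪β₃,ᾱ₃⟫ = 0 and ⟪α₁,ᾱ₃⟫ = ⟪α₂,ᾱ₃⟫ = ⟪α₄,ᾱ₃⟫ = 0; ⟪α₂,β₂⟫ + ⟪α₄,β₂⟫ = 0 and ⟪α₁,β₂⟫ = ⟪β₁,β₂⟫ = ⟪β₃,β₂⟫ = 0 (the relevant Gram relations of the Carter diagram E₇(a₃)). Set β₄ := −(α₄ + β₃ + α₂ + β₁ + α₁). Then ⟪β₄,β₄⟫ = 2, ⟪β₄,α₁⟫ = −1, and β₄ is orthogonal to each of α₂, ᾱ₃, β₁, β₂, β₃ (the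 Gram relations of the Carter diagram E₇(a₁)). -/
open scoped RealInnerProductSpace

/- Pairing with β₄ = -(α₄ + β₃ + α₂ + β₁ + α₁) is minus the sum of the pairings with the five
roots of the A₅-chain. Hence β₄ pairs to -1 with both ends α₁, α₄ of the chain and to 0 with its
interior β₁, α₂, β₃, and expanding ⟪β₄, β₄⟫ along the chain once more gives 1 + 1 = 2. -/

theorem stmt6 {V : Type*} [NormedAddCommGroup V] [InnerProductSpace ℝ V]
    (α₁ α₂ αb₃ α₄ β₁ β₂ β₃ : V)
    (h0 : ⟪α₁, α₁⟫ = 2)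
    (h1 : ⟪β₁, β₁⟫ = 2)
    (h2 : ⟪α₂, α₂⟫ = 2)
    (h3 : ⟪β₃, β₃⟫ = 2)
    (h4 : ⟪α₄, α₄⟫ = 2)
    (h5 : ⟪α₁, β₁⟫ = -1)
    (h6 : ⟪β₁, α₂⟫ = -1)
    (h7 : ⟪α₂, β₃⟫ = -1)
    (h8 : ⟪β₃, α₄⟫ = -1)
    (h9 : ⟪α₁, α₂⟫ = 0)
    (h10 : ⟪α₁, β₃⟫ = 0)
    (h11 : ⟪α₁, α₄⟫ = 0)
    (h12 : ⟪β₁, β₃⟫ = 0)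
    (h13 : ⟪β₁, α₄⟫ = 0)
    (h14 : ⟪α₂, α₄⟫ = 0)
    (h15 : ⟪β₁, αb₃⟫ + ⟪β₃, αb₃⟫ = 0)
    (h16 : ⟪α₁, αb₃⟫ = 0)
    (h17 : ⟪α₂, αb₃⟫ = 0)
    (h18 : ⟪α₄, αb₃⟫ = 0)
    (h19 : ⟪α₂, β₂⟫ + ⟪α₄, β₂⟫ = 0)
    (h20 : ⟪α₁, β₂⟫ = 0)
    (h21 : ⟪β₁, β₂⟫ = 0)
    (h22 : ⟪β₃, β₂⟫ = 0)
    (β₄ : V) (hdef : β₄ = -(α₄ + β₃ + α₂ + β₁ + α₁)) :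
    ⟪β₄, β₄⟫ = 2 ∧
    ⟪β₄, α₁⟫ = -1 ∧
    ⟪β₄, α₂⟫ = 0 ∧
    ⟪β₄, αb₃⟫ = 0 ∧
    ⟪β₄, β₁⟫ = 0 ∧
    ⟪β₄, β₂⟫ = 0 ∧
    ⟪β₄, β₃⟫ = 0 := by
  have expand (x : V) :
      ⟪β₄, x⟫ = -(⟪α₄, x⟫ + ⟪β₃, x⟫ + ⟪α₂, x⟫ + ⟪β₁, x⟫ + ⟪α₁, x⟫) := by
    subst hdef
    simp only [inner_neg_left, inner_add_left]
  have comm := @real_inner_comm V _ _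
  have e₁ : ⟪β₄, α₁⟫ = -1 := by
    rw [expand]; linarith [comm α₁ α₄, comm α₁ β₃, comm α₁ α₂, comm α₁ β₁]
  have f₁ : ⟪β₄, β₁⟫ = 0 := by
    rw [expand]; linarith [comm β₁ α₄, comm β₁ β₃, comm β₁ α₂]
  have f₂ : ⟪β₄, α₂⟫ = 0 := by
    rw [expand]; linarith [comm α₂ α₄, comm α₂ β₃]
  have f₃ : ⟪β₄, β₃⟫ = 0 := by
    rw [expand]; linarith [comm β₃ α₄]
  have e₄ : ⟪β₄, α₄⟫ = -1 := by
    rw [expand]; linarith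
  refine ⟨?_, e₁, f₂, ?_, f₁, ?_, f₃⟩
  · rw [expand]
    linarith [comm β₄ α₄, comm β₄ β₃, comm β₄ α₂, comm β₄ β₁, comm β₄ α₁]
  · rw [expand]; linarith
  · rw [expand]; linarith
end

section
/- Let V be a real inner product space and let ᾱ₁, α₂, ᾱ₃, α₄, β₁, β₂, β₃ ∈ V satisfy: ⟪β₁,β₁⟫ = ⟪ᾱ₁,ᾱ₁⟫ = ⟪α₂,α₂⟫ = ⟪ᾱ₃,ᾱ₃⟫ = 2; ⟪β₁,ᾱ₁⟫ = ⟪β₁,α₂⟫ = ⟪β₁,ᾱ₃⟫ = −1 and ⟪ᾱ₁,α₂⟫ = ⟪ᾱ₁,ᾱ₃⟫ = ⟪α₂,ᾱ₃⟫ = 0; ⟪α₂,β₃⟫ + ⟪ᾱ₃,β₃⟫ = 0 and ⟪ᾱ₁,β₃⟫ = ⟪β₁,β₃⟫ = 0; ⟪ᾱ₁,β₂⟫ + ⟪α₂,β₂⟫ = 0 and ⟪ᾱ₃,β₂⟫ = ⟪β₁,β₂⟫ = 0; α₄ is orthogonal to each of ᾱ₁, α₂, ᾱ₃, β₁ (the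 relevant Gram relations of the Carter diagram E₇(a₄)). Set α₁ := −(2β₁ + ᾱ₁ + α₂ + ᾱ₃). Then ⟪α₁,α₁⟫ = 2, ⟪α₁,β₁⟫ = −1, and α₁ is orthogonal to each of α₂, ᾱ₃, α₄, β₂, β₃ (the Gram relations of the Carter diagram E₇(a₃)). -/
/-!
α₁ = -(2β₁ + ᾱ₁ + α₂ + ᾱ₃) is the negative of the highest root of the D₄-subsystem with center β₁,
so its inner product with any x is -(2⟪β₁,x⟫ + ⟪ᾱ₁,x⟫ + ⟪α₂,x⟫ + ⟪ᾱ₃,x⟫). This vanishes on the three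
legs and on every vector orthogonal to β₁ whose leg products cancel, and equals -1 on β₁; pairing
α₁ with its own expansion then gives ⟪α₁,α₁⟫ = -2⟪α₁,β₁⟫ = 2.
-/

open scoped RealInnerProductSpace

namespace D4

variable {V : Type*} [NormedAddCommGroup V] [InnerProductSpace ℝ V]

structure IsStar (β a b c : V) : Prop where
  center : ⟪β, β⟫ = 2
  leg_a : ⟪a, a⟫ = 2
  leg_b : ⟪b, b⟫ = 2
  leg_c : ⟪c, c⟫ = 2
  center_a : ⟪β, a⟫ = -1
  center_b : ⟪β, b⟫ = -1
  center_c : ⟪β, c⟫ = -1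
  a_b : ⟪a, b⟫ = 0
  a_c : ⟪a, c⟫ = 0
  b_c : ⟪b, c⟫ = 0

def minimalRoot (β a b c : V) : V := -((2 : ℝ) • β + a + b + c)

theorem inner_minimalRoot_left (β a b c x : V) :
    ⟪minimalRoot β a b c, x⟫ = -(2 * ⟪β, x⟫ + ⟪a, x⟫ + ⟪b, x⟫ + ⟪c, x⟫) := by
  simp only [minimalRoot, inner_neg_left, inner_add_left, real_inner_smul_left]

theorem inner_minimalRoot_eq_zero {β a b c x : V}
    (h : 2 * ⟪β, x⟫ + ⟪a, x⟫ + ⟪b, x⟫ + ⟪c, x⟫ = 0) : ⟪minimalRoot β a b c, x⟫ = 0 := by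
  rw [inner_minimalRoot_left, h, neg_zero]

namespace IsStar

variable {β a b c : V} (h : IsStar β a b c)
include h

theorem inner_minimalRoot_center : ⟪minimalRoot β a b c, β⟫ = -1 := by
  rw [inner_minimalRoot_left, real_inner_comm β a, real_inner_comm β b, real_inner_comm β c,
    h.center, h.center_a, h.center_b, h.center_c]
  norm_num

theorem inner_minimalRoot_a : ⟪minimalRoot β a b c, a⟫ = 0 :=
  inner_minimalRoot_eq_zero <| by
    rw [real_inner_comm a b, real_inner_comm a c, h.center_a, h.leg_a, h.a_b, h.a_c]
    norm_num

theorem inner_minimalRoot_b : ⟪minimalRoot β a b c, b⟫ = 0 :=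
  inner_minimalRoot_eq_zero <| by
    rw [real_inner_comm b c, h.center_b, h.a_b, h.leg_b, h.b_c]
    norm_num

theorem inner_minimalRoot_c : ⟪minimalRoot β a b c, c⟫ = 0 :=
  inner_minimalRoot_eq_zero <| by
    rw [h.center_c, h.a_c, h.b_c, h.leg_c]
    norm_num

theorem inner_minimalRoot_self : ⟪minimalRoot β a b c, minimalRoot β a b c⟫ = 2 := by
  set α := minimalRoot β a b c
  conv_lhs => rw [inner_minimalRoot_left]
  rw [real_inner_comm α β, real_inner_comm α a, real_inner_comm α b, real_inner_comm α c,
    h.inner_minimalRoot_center, h.inner_minimalRoot_a, h.inner_minimalRoot_b,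
    h.inner_minimalRoot_c]
  norm_num

end IsStar

end D4

open D4 in
theorem stmt7 {V : Type*} [NormedAddCommGroup V] [InnerProductSpace ℝ V]
    (αb₁ α₂ αb₃ α₄ β₁ β₂ β₃ : V)
    (h0 : ⟪β₁, β₁⟫ = 2)
    (h1 : ⟪αb₁, αb₁⟫ = 2)
    (h2 : ⟪α₂, α₂⟫ = 2)
    (h3 : ⟪αb₃, αb₃⟫ = 2)
    (h4 : ⟪β₁, αb₁⟫ = -1)
    (h5 : ⟪β₁, α₂⟫ = -1)
    (h6 : ⟪β₁, αb₃⟫ = -1)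
    (h7 : ⟪αb₁, α₂⟫ = 0)
    (h8 : ⟪αb₁, αb₃⟫ = 0)
    (h9 : ⟪α₂, αb₃⟫ = 0)
    (h10 : ⟪α₂, β₃⟫ + ⟪αb₃, β₃⟫ = 0)
    (h11 : ⟪αb₁, β₃⟫ = 0)
    (h12 : ⟪β₁, β₃⟫ = 0)
    (h13 : ⟪αb₁, β₂⟫ + ⟪α₂, β₂⟫ = 0)
    (h14 : ⟪αb₃, β₂⟫ = 0)
    (h15 : ⟪β₁, β₂⟫ = 0)
    (h16 : ⟪α₄, αb₁⟫ = 0)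
    (h17 : ⟪α₄, α₂⟫ = 0)
    (h18 : ⟪α₄, αb₃⟫ = 0)
    (h19 : ⟪α₄, β₁⟫ = 0)
    (α₁ : V) (hdef : α₁ = -((2:ℝ) • β₁ + αb₁ + α₂ + αb₃)) :
    ⟪α₁, α₁⟫ = 2 ∧
    ⟪α₁, β₁⟫ = -1 ∧
    ⟪α₁, α₂⟫ = 0 ∧
    ⟪α₁, αb₃⟫ = 0 ∧
    ⟪α₁, α₄⟫ = 0 ∧
    ⟪α₁, β₂⟫ = 0 ∧
    ⟪α₁, β₃⟫ = 0 := by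
  have hα₁ : α₁ = minimalRoot β₁ αb₁ α₂ αb₃ := hdef
  subst hα₁
  have hstar : IsStar β₁ αb₁ α₂ αb₃ := ⟨h0, h1, h2, h3, h4, h5, h6, h7, h8, h9⟩
  refine ⟨hstar.inner_minimalRoot_self, hstar.inner_minimalRoot_center,
    hstar.inner_minimalRoot_b, hstar.inner_minimalRoot_c, ?_, ?_, ?_⟩
  · refine inner_minimalRoot_eq_zero ?_
    rw [real_inner_comm α₄ β₁, real_inner_comm α₄ αb₁, real_inner_comm α₄ α₂,
      real_inner_comm α₄ αb₃, h19, h16, h17, h18]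
    norm_num
  · exact inner_minimalRoot_eq_zero (by rw [h15, h14]; linarith)
  · exact inner_minimalRoot_eq_zero (by rw [h12, h11]; linarith)
end

section
/- Let V be a real inner product space and let α₁, α₂, ᾱ₃, α₄, β₁, β₂, β₃, β₄ ∈ V satisfy: ⟪β₂,β₂⟫ = ⟪α₂,α₂⟫ = ⟪β₃,β₃⟫ = ⟪ᾱ₃,ᾱ₃⟫ = 2; ⟪β₂,α₂⟫ = −1, ⟪α₂,β₃⟫ = −1, ⟪β₃,ᾱ₃⟫ = −1, ⟪β₂,β₃⟫ = ⟪β₂,ᾱ₃⟫ = ⟪α₂,ᾱ₃⟫ = 0; ⟪ᾱ₃,β₁⟫ + ⟪α₂,β₁⟫ = 0 and ⟪β₂,β₁⟫ = ⟪β₃,β₁⟫ = 0; and each of β₂, α₂, β₃, ᾱ₃ is orthogonal to α₁, to α₄, and to β₄ (the relevant Gram relations of the Carter diagram E₈(a₁)). Set α₃ := −(ᾱ₃ + β₃ + α₂ + β₂). Then ⟪α₃,α₃⟫ = 2, ⟪α₃,β₂⟫ = −1, and α₃ is orthogonal to each of α₁, α₂, α₄, β₁, β₃, β₄ (the Gram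 relations of the Dynkin diagram E₈). -/
open scoped RealInnerProductSpace

/-!
The four vectors β₂, α₂, β₃, ᾱ₃ form a chain of roots of type A₄, whose highest root is their sum.
Its negative μ pairs with each chain root γ to `-(sum of the pairings of γ with the chain)`, which is
`-1` at the two ends and `0` in the interior; hence `⟪μ, μ⟫ = -(-1 + 0 + 0 - 1) = 2`, and μ is
orthogonal to every vector that is orthogonal to the chain, or more generally whose pairings with the
chain roots sum to zero (as for β₁).
-/

section A₄Chain

variable {V : Type*} [NormedAddCommGroup V] [InnerProductSpace ℝ V]

structure IsA₄Chain (γ₁ γ₂ γ₃ γ₄ : V) : Prop where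
  inner_self₁ : ⟪γ₁, γ₁⟫ = 2
  inner_self₂ : ⟪γ₂, γ₂⟫ = 2
  inner_self₃ : ⟪γ₃, γ₃⟫ = 2
  inner_self₄ : ⟪γ₄, γ₄⟫ = 2
  inner₁₂ : ⟪γ₁, γ₂⟫ = -1
  inner₂₃ : ⟪γ₂, γ₃⟫ = -1
  inner₃₄ : ⟪γ₃, γ₄⟫ = -1
  inner₁₃ : ⟪γ₁, γ₃⟫ = 0
  inner₁₄ : ⟪γ₁, γ₄⟫ = 0
  inner₂₄ : ⟪γ₂, γ₄⟫ = 0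

def a₄MinimalRoot (γ₁ γ₂ γ₃ γ₄ : V) : V := -(γ₁ + γ₂ + γ₃ + γ₄)

theorem inner_a₄MinimalRoot_left (γ₁ γ₂ γ₃ γ₄ v : V) :
    ⟪a₄MinimalRoot γ₁ γ₂ γ₃ γ₄, v⟫ = -(⟪γ₁, v⟫ + ⟪γ₂, v⟫ + ⟪γ₃, v⟫ + ⟪γ₄, v⟫) := by
  simp only [a₄MinimalRoot, inner_neg_left, inner_add_left]

theorem inner_a₄MinimalRoot_left_eq_zero {γ₁ γ₂ γ₃ γ₄ v : V} (h₁ : ⟪γ₁, v⟫ = 0)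
    (h₂ : ⟪γ₂, v⟫ = 0) (h₃ : ⟪γ₃, v⟫ = 0) (h₄ : ⟪γ₄, v⟫ = 0) :
    ⟪a₄MinimalRoot γ₁ γ₂ γ₃ γ₄, v⟫ = 0 := by
  rw [inner_a₄MinimalRoot_left, h₁, h₂, h₃, h₄]
  norm_num

namespace IsA₄Chain

variable {γ₁ γ₂ γ₃ γ₄ : V} (h : IsA₄Chain γ₁ γ₂ γ₃ γ₄)
include h

theorem inner_a₄MinimalRoot_first : ⟪a₄MinimalRoot γ₁ γ₂ γ₃ γ₄, γ₁⟫ = -1 := by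
  rw [inner_a₄MinimalRoot_left, real_inner_comm γ₁ γ₂, real_inner_comm γ₁ γ₃,
    real_inner_comm γ₁ γ₄, h.inner_self₁, h.inner₁₂, h.inner₁₃, h.inner₁₄]
  norm_num

theorem inner_a₄MinimalRoot_second : ⟪a₄MinimalRoot γ₁ γ₂ γ₃ γ₄, γ₂⟫ = 0 := by
  rw [inner_a₄MinimalRoot_left, real_inner_comm γ₂ γ₃, real_inner_comm γ₂ γ₄,
    h.inner_self₂, h.inner₁₂, h.inner₂₃, h.inner₂₄]
  norm_num

theorem inner_a₄MinimalRoot_third : ⟪a₄MinimalRoot γ₁ γ₂ γ₃ γ₄, γ₃⟫ = 0 := by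
  rw [inner_a₄MinimalRoot_left, real_inner_comm γ₃ γ₄, h.inner_self₃, h.inner₁₃, h.inner₂₃,
    h.inner₃₄]
  norm_num

theorem inner_a₄MinimalRoot_fourth : ⟪a₄MinimalRoot γ₁ γ₂ γ₃ γ₄, γ₄⟫ = -1 := by
  rw [inner_a₄MinimalRoot_left, h.inner_self₄, h.inner₁₄, h.inner₂₄, h.inner₃₄]
  norm_num

theorem inner_a₄MinimalRoot_self :
    ⟪a₄MinimalRoot γ₁ γ₂ γ₃ γ₄, a₄MinimalRoot γ₁ γ₂ γ₃ γ₄⟫ = 2 := by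
  set μ := a₄MinimalRoot γ₁ γ₂ γ₃ γ₄
  rw [inner_a₄MinimalRoot_left, real_inner_comm μ, real_inner_comm μ, real_inner_comm μ,
    real_inner_comm μ, h.inner_a₄MinimalRoot_first, h.inner_a₄MinimalRoot_second,
    h.inner_a₄MinimalRoot_third, h.inner_a₄MinimalRoot_fourth]
  norm_num

end IsA₄Chain

end A₄Chain

theorem stmt8 {V : Type*} [NormedAddCommGroup V] [InnerProductSpace ℝ V]
    (α₁ α₂ αb₃ α₄ β₁ β₂ β₃ β₄ : V)
    (h0 : ⟪β₂, β₂⟫ = 2)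
    (h1 : ⟪α₂, α₂⟫ = 2)
    (h2 : ⟪β₃, β₃⟫ = 2)
    (h3 : ⟪αb₃, αb₃⟫ = 2)
    (h4 : ⟪β₂, α₂⟫ = -1)
    (h5 : ⟪α₂, β₃⟫ = -1)
    (h6 : ⟪β₃, αb₃⟫ = -1)
    (h7 : ⟪β₂, β₃⟫ = 0)
    (h8 : ⟪β₂, αb₃⟫ = 0)
    (h9 : ⟪α₂, αb₃⟫ = 0)
    (h10 : ⟪αb₃, β₁⟫ + ⟪α₂, β₁⟫ = 0)
    (h11 : ⟪β₂, β₁⟫ = 0)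
    (h12 : ⟪β₃, β₁⟫ = 0)
    (h13 : ⟪β₂, α₁⟫ = 0)
    (h14 : ⟪β₂, α₄⟫ = 0)
    (h15 : ⟪β₂, β₄⟫ = 0)
    (h16 : ⟪α₂, α₁⟫ = 0)
    (h17 : ⟪α₂, α₄⟫ = 0)
    (h18 : ⟪α₂, β₄⟫ = 0)
    (h19 : ⟪β₃, α₁⟫ = 0)
    (h20 : ⟪β₃, α₄⟫ = 0)
    (h21 : ⟪β₃, β₄⟫ = 0)
    (h22 : ⟪αb₃, α₁⟫ = 0)
    (h23 : ⟪αb₃, α₄⟫ = 0)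
    (h24 : ⟪αb₃, β₄⟫ = 0)
    (α₃ : V) (hdef : α₃ = -(αb₃ + β₃ + α₂ + β₂)) :
    ⟪α₃, α₃⟫ = 2 ∧
    ⟪α₃, β₂⟫ = -1 ∧
    ⟪α₃, α₁⟫ = 0 ∧
    ⟪α₃, α₂⟫ = 0 ∧
    ⟪α₃, α₄⟫ = 0 ∧
    ⟪α₃, β₁⟫ = 0 ∧
    ⟪α₃, β₃⟫ = 0 ∧
    ⟪α₃, β₄⟫ = 0 := by
  have hchain : IsA₄Chain β₂ α₂ β₃ αb₃ := ⟨h0, h1, h2, h3, h4, h5, h6, h7, h8, h9⟩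
  have hα₃ : α₃ = a₄MinimalRoot β₂ α₂ β₃ αb₃ := by
    rw [hdef, a₄MinimalRoot]
    abel
  have hβ₁ : ⟪α₃, β₁⟫ = 0 := by
    rw [hα₃, inner_a₄MinimalRoot_left, h11, h12]
    linarith
  subst hα₃
  exact ⟨hchain.inner_a₄MinimalRoot_self, hchain.inner_a₄MinimalRoot_first,
    inner_a₄MinimalRoot_left_eq_zero h13 h16 h19 h22, hchain.inner_a₄MinimalRoot_second,
    inner_a₄MinimalRoot_left_eq_zero h14 h17 h20 h23, hβ₁, hchain.inner_a₄MinimalRoot_third,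
    inner_a₄MinimalRoot_left_eq_zero h15 h18 h21 h24⟩
end

section
/- Let V be a real inner product space and let ᾱ₁, α₂, α₃, α₄, β₁, β₂, β₃, β₄ ∈ V satisfy: ⟪β₁,β₁⟫ = ⟪α₂,α₂⟫ = ⟪β₃,β₃⟫ = ⟪ᾱ₁,ᾱ₁⟫ = 2; ⟪β₁,α₂⟫ = −1, ⟪α₂,β₃⟫ = −1, ⟪β₃,ᾱ₁⟫ = −1, ⟪β₁,β₃⟫ = ⟪β₁,ᾱ₁⟫ = ⟪α₂,ᾱ₁⟫ = 0; ⟪ᾱ₁,β₂⟫ + ⟪α₂,β₂⟫ = 0 and ⟪β₁,β₂⟫ = ⟪β₃,β₂⟫ = 0; each of β₁, α₂, β₃, ᾱ₁ is orthogonal to α₃ and to α₄; and ⟪ᾱ₁,β₄⟫ = −1, ⟪α₂,β₄⟫ = 0, ⟪β₁,β₄⟫ = ⟪β₃,β₄⟫ = 0 (the relevant Gram relations of the Carter diagram E₈(a₂)). Set α₁ := −(ᾱ₁ + β₃ + α₂ + β₁). Then ⟪α₁,α₁⟫ = 2, ⟪α₁,β₁⟫ = −1, ⟪α₁,β₄⟫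 = 1, and α₁ is orthogonal to each of α₂, α₃, α₄, β₂, β₃ (the Gram relations of the Dynkin diagram E₈ up to the sign of the edge {α₁,β₄}). -/
/-! `α₁` is minus the highest root `β₁ + α₂ + β₃ + ᾱ₁` of the `A₄` chain, so it is a root that
closes the chain into the extended diagram `Ã₄`, joined to `β₁` and orthogonal to `α₂, β₃`; every
other Gram value of `α₁` is minus a sum of four given ones. -/

open scoped RealInnerProductSpace

section A4Chain

variable {V : Type*} [NormedAddCommGroup V] [InnerProductSpace ℝ V]

lemma inner_neg_sum_left (τ₁ τ₂ τ₃ τ₄ v : V) :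
    ⟪-(τ₁ + τ₂ + τ₃ + τ₄), v⟫ = -(⟪τ₁, v⟫ + ⟪τ₂, v⟫ + ⟪τ₃, v⟫ + ⟪τ₄, v⟫) := by
  simp only [inner_neg_left, inner_add_left]

structure IsA4Chain (τ₁ τ₂ τ₃ τ₄ : V) : Prop where
  inner_self₁ : ⟪τ₁, τ₁⟫ = 2
  inner_self₂ : ⟪τ₂, τ₂⟫ = 2
  inner_self₃ : ⟪τ₃, τ₃⟫ = 2
  inner_self₄ : ⟪τ₄, τ₄⟫ = 2
  inner₁₂ : ⟪τ₁, τ₂⟫ = -1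
  inner₂₃ : ⟪τ₂, τ₃⟫ = -1
  inner₃₄ : ⟪τ₃, τ₄⟫ = -1
  inner₁₃ : ⟪τ₁, τ₃⟫ = 0
  inner₁₄ : ⟪τ₁, τ₄⟫ = 0
  inner₂₄ : ⟪τ₂, τ₄⟫ = 0

namespace IsA4Chain

variable {τ₁ τ₂ τ₃ τ₄ : V}

lemma inner_neg_sum_self (h : IsA4Chain τ₁ τ₂ τ₃ τ₄) :
    ⟪-(τ₁ + τ₂ + τ₃ + τ₄), -(τ₁ + τ₂ + τ₃ + τ₄)⟫ = 2 := by
  simp only [inner_neg_left, inner_neg_right, inner_add_left, inner_add_right,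
    real_inner_comm τ₁ τ₂, real_inner_comm τ₁ τ₃, real_inner_comm τ₁ τ₄,
    real_inner_comm τ₂ τ₃, real_inner_comm τ₂ τ₄, real_inner_comm τ₃ τ₄,
    h.inner_self₁, h.inner_self₂, h.inner_self₃, h.inner_self₄,
    h.inner₁₂, h.inner₂₃, h.inner₃₄, h.inner₁₃, h.inner₁₄, h.inner₂₄]
  norm_num

lemma inner_neg_sum_first (h : IsA4Chain τ₁ τ₂ τ₃ τ₄) : ⟪-(τ₁ + τ₂ + τ₃ + τ₄), τ₁⟫ = -1 := by
  rw [inner_neg_sum_left, h.inner_self₁, real_inner_comm, h.inner₁₂, real_inner_comm,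
    h.inner₁₃, real_inner_comm, h.inner₁₄]
  norm_num

lemma inner_neg_sum_second (h : IsA4Chain τ₁ τ₂ τ₃ τ₄) : ⟪-(τ₁ + τ₂ + τ₃ + τ₄), τ₂⟫ = 0 := by
  rw [inner_neg_sum_left, h.inner₁₂, h.inner_self₂, real_inner_comm, h.inner₂₃,
    real_inner_comm, h.inner₂₄]
  norm_num

lemma inner_neg_sum_third (h : IsA4Chain τ₁ τ₂ τ₃ τ₄) : ⟪-(τ₁ + τ₂ + τ₃ + τ₄), τ₃⟫ = 0 := by
  rw [inner_neg_sum_left, h.inner₁₃, h.inner₂₃, h.inner_self₃, real_inner_comm, h.inner₃₄]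
  norm_num

end IsA4Chain

end A4Chain

theorem stmt9 {V : Type*} [NormedAddCommGroup V] [InnerProductSpace ℝ V]
    (αb₁ α₂ α₃ α₄ β₁ β₂ β₃ β₄ : V)
    (h0 : ⟪β₁, β₁⟫ = 2)
    (h1 : ⟪α₂, α₂⟫ = 2)
    (h2 : ⟪β₃, β₃⟫ = 2)
    (h3 : ⟪αb₁, αb₁⟫ = 2)
    (h4 : ⟪β₁, α₂⟫ = -1)
    (h5 : ⟪α₂, β₃⟫ = -1)
    (h6 : ⟪β₃, αb₁⟫ = -1)
    (h7 : ⟪β₁, β₃⟫ = 0)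
    (h8 : ⟪β₁, αb₁⟫ = 0)
    (h9 : ⟪α₂, αb₁⟫ = 0)
    (h10 : ⟪αb₁, β₂⟫ + ⟪α₂, β₂⟫ = 0)
    (h11 : ⟪β₁, β₂⟫ = 0)
    (h12 : ⟪β₃, β₂⟫ = 0)
    (h13 : ⟪β₁, α₃⟫ = 0)
    (h14 : ⟪β₁, α₄⟫ = 0)
    (h15 : ⟪α₂, α₃⟫ = 0)
    (h16 : ⟪α₂, α₄⟫ = 0)
    (h17 : ⟪β₃, α₃⟫ = 0)
    (h18 : ⟪β₃, α₄⟫ = 0)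
    (h19 : ⟪αb₁, α₃⟫ = 0)
    (h20 : ⟪αb₁, α₄⟫ = 0)
    (h21 : ⟪αb₁, β₄⟫ = -1)
    (h22 : ⟪α₂, β₄⟫ = 0)
    (h23 : ⟪β₁, β₄⟫ = 0)
    (h24 : ⟪β₃, β₄⟫ = 0)
    (α₁ : V) (hdef : α₁ = -(αb₁ + β₃ + α₂ + β₁)) :
    ⟪α₁, α₁⟫ = 2 ∧
    ⟪α₁, β₁⟫ = -1 ∧
    ⟪α₁, β₄⟫ = 1 ∧
    ⟪α₁, α₂⟫ = 0 ∧
    ⟪α₁, α₃⟫ = 0 ∧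
    ⟪α₁, α₄⟫ = 0 ∧
    ⟪α₁, β₂⟫ = 0 ∧
    ⟪α₁, β₃⟫ = 0 := by
  have hA : IsA4Chain β₁ α₂ β₃ αb₁ := ⟨h0, h1, h2, h3, h4, h5, h6, h7, h8, h9⟩
  obtain rfl : α₁ = -(β₁ + α₂ + β₃ + αb₁) := by rw [hdef]; abel
  refine ⟨hA.inner_neg_sum_self, hA.inner_neg_sum_first, ?_, hA.inner_neg_sum_second, ?_, ?_, ?_,
    hA.inner_neg_sum_third⟩
  · rw [inner_neg_sum_left, h23, h22, h24, h21]; norm_num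
  · rw [inner_neg_sum_left, h13, h15, h17, h19]; norm_num
  · rw [inner_neg_sum_left, h14, h16, h18, h20]; norm_num
  · rw [inner_neg_sum_left, h11, h12]; linarith
end

section
/- Let V be a real inner product space and let ᾱ₁, α₂, α₃, ᾱ₄, β₁, β₂, β₃, β₄ ∈ V satisfy: ⟪ᾱ₁,ᾱ₁⟫ = ⟪β₂,β₂⟫ = ⟪β₃,β₃⟫ = ⟪β₄,β₄⟫ = ⟪α₃,α₃⟫ = ⟪ᾱ₄,ᾱ₄⟫ = 2; ⟪ᾱ₁,β₂⟫ = ⟪ᾱ₁,β₃⟫ = ⟪ᾱ₁,β₄⟫ = −1, ⟪β₂,α₃⟫ = −1, ⟪β₃,ᾱ₄⟫ = −1, and all other inner products among ᾱ₁, β₂, β₃, β₄, α₃, ᾱ₄ vanish; ⟪β₂,α₂⟫ + ⟪β₃,α₂⟫ = 0 and ⟪ᾱ₁,α₂⟫ = ⟪β₄,α₂⟫ = ⟪α₃,α₂⟫ = ⟪ᾱ₄,α₂⟫ = 0; and each of ᾱ₁, β₂, β₃, β₄, α₃, ᾱ₄ is orthogonal to β₁ (the relevant Gram relations of the Carter diagram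 E₈(a₃)). Set α₄ := −(3ᾱ₁ + 2β₂ + 2β₃ + 2β₄ + α₃ + ᾱ₄). Then ⟪α₄,α₄⟫ = 2, ⟪α₄,β₄⟫ = −1, and α₄ is orthogonal to each of ᾱ₁, α₂, α₃, β₁, β₂, β₃ (the Gram relations of the Carter diagram E₈(a₂)). -/
open scoped RealInnerProductSpace

/-! α₄ is minus the highest root of the E₆-subsystem, and the highest root is orthogonal to every
simple root except β₄, with which it pairs to 1. Pairing α₄ with the six simple roots first, the
norm then follows by expanding only one side: ⟪α₄, α₄⟫ = -2 ⟪α₄, β₄⟫ = 2. -/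

theorem stmt10 {V : Type*} [NormedAddCommGroup V] [InnerProductSpace ℝ V]
    (αb₁ α₂ α₃ αb₄ β₁ β₂ β₃ β₄ : V)
    (h0 : ⟪αb₁, αb₁⟫ = 2)
    (h1 : ⟪β₂, β₂⟫ = 2)
    (h2 : ⟪β₃, β₃⟫ = 2)
    (h3 : ⟪β₄, β₄⟫ = 2)
    (h4 : ⟪α₃, α₃⟫ = 2)
    (h5 : ⟪αb₄, αb₄⟫ = 2)
    (h6 : ⟪αb₁, β₂⟫ = -1)
    (h7 : ⟪αb₁, β₃⟫ = -1)
    (h8 : ⟪αb₁, β₄⟫ = -1)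
    (h9 : ⟪β₂, α₃⟫ = -1)
    (h10 : ⟪β₃, αb₄⟫ = -1)
    (h11 : ⟪β₂, β₃⟫ = 0)
    (h12 : ⟪β₂, β₄⟫ = 0)
    (h13 : ⟪β₂, αb₄⟫ = 0)
    (h14 : ⟪β₃, β₄⟫ = 0)
    (h15 : ⟪β₃, α₃⟫ = 0)
    (h16 : ⟪β₄, α₃⟫ = 0)
    (h17 : ⟪β₄, αb₄⟫ = 0)
    (h18 : ⟪α₃, αb₄⟫ = 0)
    (h19 : ⟪αb₁, α₃⟫ = 0)
    (h20 : ⟪αb₁, αb₄⟫ = 0)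
    (h21 : ⟪β₂, α₂⟫ + ⟪β₃, α₂⟫ = 0)
    (h22 : ⟪αb₁, α₂⟫ = 0)
    (h23 : ⟪β₄, α₂⟫ = 0)
    (h24 : ⟪α₃, α₂⟫ = 0)
    (h25 : ⟪αb₄, α₂⟫ = 0)
    (h26 : ⟪αb₁, β₁⟫ = 0)
    (h27 : ⟪β₂, β₁⟫ = 0)
    (h28 : ⟪β₃, β₁⟫ = 0)
    (h29 : ⟪β₄, β₁⟫ = 0)
    (h30 : ⟪α₃, β₁⟫ = 0)
    (h31 : ⟪αb₄, β₁⟫ = 0)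
    (α₄ : V) (hdef : α₄ = -((3:ℝ) • αb₁ + (2:ℝ) • β₂ + (2:ℝ) • β₃ + (2:ℝ) • β₄ + α₃ + αb₄)) :
    ⟪α₄, α₄⟫ = 2 ∧
    ⟪α₄, β₄⟫ = -1 ∧
    ⟪α₄, αb₁⟫ = 0 ∧
    ⟪α₄, α₂⟫ = 0 ∧
    ⟪α₄, α₃⟫ = 0 ∧
    ⟪α₄, β₁⟫ = 0 ∧
    ⟪α₄, β₂⟫ = 0 ∧
    ⟪α₄, β₃⟫ = 0 := by
  have hleft : ∀ w : V, ⟪α₄, w⟫ = -(3 * ⟪αb₁, w⟫ + 2 * ⟪β₂, w⟫ + 2 * ⟪β₃, w⟫ + 2 * ⟪β₄, w⟫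
      + ⟪α₃, w⟫ + ⟪αb₄, w⟫) := fun w => by
    simp only [hdef, inner_neg_left, inner_add_left, real_inner_smul_left]
  have hright : ∀ w : V, ⟪w, α₄⟫ = -(3 * ⟪w, αb₁⟫ + 2 * ⟪w, β₂⟫ + 2 * ⟪w, β₃⟫ + 2 * ⟪w, β₄⟫
      + ⟪w, α₃⟫ + ⟪w, αb₄⟫) := fun w => by
    simp only [hdef, inner_neg_right, inner_add_right, real_inner_smul_right]
  have hαb₁ : ⟪α₄, αb₁⟫ = 0 := by
    rw [real_inner_comm, hright]; linarith
  have hβ₂ : ⟪α₄, β₂⟫ = 0 := by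
    rw [real_inner_comm, hright]; linarith [real_inner_comm αb₁ β₂]
  have hβ₃ : ⟪α₄, β₃⟫ = 0 := by
    rw [real_inner_comm, hright]; linarith [real_inner_comm αb₁ β₃, real_inner_comm β₂ β₃]
  have hβ₄ : ⟪α₄, β₄⟫ = -1 := by
    rw [hleft]; linarith [real_inner_comm β₄ α₃, real_inner_comm β₄ αb₄]
  have hα₃ : ⟪α₄, α₃⟫ = 0 := by
    rw [hleft]; linarith [real_inner_comm α₃ αb₄]
  have hαb₄ : ⟪α₄, αb₄⟫ = 0 := by
    rw [hleft]; linarith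
  refine ⟨?_, hβ₄, hαb₁, ?_, hα₃, ?_, hβ₂, hβ₃⟩
  · rw [hright, hαb₁, hβ₂, hβ₃, hβ₄, hα₃, hαb₄]
    norm_num
  · rw [hleft]; linarith
  · rw [hleft]; linarith
end

section
/- Let V be a real inner product space and let α₁, α₂, ᾱ₃, ᾱ₄, β₁, β₂, β₃, β₄ ∈ V satisfy: ⟪β₄,β₄⟫ = ⟪α₁,α₁⟫ = ⟪β₁,β₁⟫ = ⟪α₂,α₂⟫ = ⟪β₃,β₃⟫ = ⟪ᾱ₄,ᾱ₄⟫ = 2; ⟪β₄,α₁⟫ = −1, ⟪α₁,β₁⟫ = −1, ⟪β₁,α₂⟫ = −1, ⟪α₂,β₃⟫ = −1, ⟪β₃,ᾱ₄⟫ = −1, and all other inner products among β₄, α₁, β₁, α₂, β₃, ᾱ₄ vanish; ⟪β₃,ᾱ₃⟫ + ⟪β₁,ᾱ₃⟫ = 0 and ⟪α₁,ᾱ₃⟫ = ⟪α₂,ᾱ₃⟫ = ⟪ᾱ₄,ᾱ₃⟫ = ⟪β₄,ᾱ₃⟫ = 0; ⟪ᾱ₄,β₂⟫ + ⟪α₂,β₂⟫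 = 0 and ⟪α₁,β₂⟫ = ⟪β₁,β₂⟫ = ⟪β₃,β₂⟫ = ⟪β₄,β₂⟫ = 0 (the relevant Gram relations of the Carter diagram E₈(a₄)). Set α₄ := −(ᾱ₄ + β₃ + α₂ + β₁ + α₁ + β₄). Then ⟪α₄,α₄⟫ = 2, ⟪α₄,β₄⟫ = −1, and α₄ is orthogonal to each of α₁, α₂, ᾱ₃, β₁, β₂, β₃ (the Gram relations of the Carter diagram E₈(a₁)). -/
/-!
The chain β₄ – α₁ – β₁ – α₂ – β₃ – ᾱ₄ is a simple system of type A₆, and α₄ is minus the sum of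
its simple roots, i.e. minus the highest root of A₆. For any chain of type A the sum of the
simple roots has norm 2, pairs to 1 with the two end nodes and to 0 with the interior nodes.
The pairings of α₄ with ᾱ₃ and β₂ vanish because the only nonzero terms cancel in pairs.
-/

open scoped RealInnerProductSpace

open Finset

section TypeAChain

variable {V : Type*} [NormedAddCommGroup V] [InnerProductSpace ℝ V]

/-- Gram relations of the simple roots of type `A_m`, numbered along the Dynkin diagram. -/
def IsTypeAChain {m : ℕ} (v : Fin m → V) : Prop :=
  (∀ i, ⟪v i, v i⟫ = 2) ∧ ∀ i j : Fin m, i < j → ⟪v i, v j⟫ = if (i : ℕ) + 1 = j then -1 else 0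

namespace IsTypeAChain

variable {m : ℕ} {v : Fin m → V}

theorem inner_eq (hv : IsTypeAChain v) (i j : Fin m) :
    ⟪v i, v j⟫ =
      if (i : ℕ) = j then 2 else if (i : ℕ) + 1 = j ∨ (j : ℕ) + 1 = i then -1 else 0 := by
  rcases lt_trichotomy i j with hij | rfl | hij
  · have : ¬ (j : ℕ) + 1 = i := by omega
    simp only [hv.2 i j hij, Fin.val_ne_of_ne hij.ne, this, or_false, if_false]
  · simp only [hv.1 i, if_true]
  · have : ¬ (i : ℕ) + 1 = j := by omega
    rw [real_inner_comm, hv.2 j i hij]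
    simp only [Fin.val_ne_of_ne hij.ne', this, false_or, if_false]

theorem inner_sum_left {n : ℕ} {v : Fin (n + 2) → V} (hv : IsTypeAChain v) (i : Fin (n + 2)) :
    ⟪∑ j, v j, v i⟫ = (if (i : ℕ) = 0 then 1 else 0) + if (i : ℕ) = n + 1 then 1 else 0 := by
  have hterm : ∀ j : ℕ, (if j = i then (2 : ℝ) else if j + 1 = i ∨ (i : ℕ) + 1 = j then -1 else 0) =
      (if j = i then 2 else 0) - (if j + 1 = i then 1 else 0) - (if j = i + 1 then 1 else 0) := by
    intro j; split_ifs <;> first | omega | norm_num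
  rw [sum_inner]
  simp only [hv.inner_eq]
  rw [Fin.sum_univ_eq_sum_range (fun j => if j = (i : ℕ) then (2 : ℝ) else
    if j + 1 = i ∨ (i : ℕ) + 1 = j then -1 else 0)]
  simp only [hterm, sum_sub_distrib, sum_ite_eq', mem_range, i.isLt, if_true]
  have hpred : ∑ j ∈ range (n + 2), (if j + 1 = (i : ℕ) then (1 : ℝ) else 0) =
      if (i : ℕ) = 0 then 0 else 1 := by
    obtain ⟨i, hi⟩ := i
    cases i with
    | zero => simp
    | succ k =>
      simp only [Nat.add_right_cancel_iff, sum_ite_eq', mem_range, if_pos (show k < n + 2 by omega),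
        Nat.add_one_ne_zero, if_false]
  rw [hpred]
  split_ifs <;> first | omega | norm_num

theorem inner_sum_self {n : ℕ} {v : Fin (n + 2) → V} (hv : IsTypeAChain v) :
    ⟪∑ j, v j, ∑ j, v j⟫ = 2 := by
  rw [inner_sum]
  simp only [hv.inner_sum_left]
  rw [Fin.sum_univ_eq_sum_range
      (fun i => (if i = 0 then (1 : ℝ) else 0) + if i = n + 1 then 1 else 0),
    sum_add_distrib, sum_ite_eq', sum_ite_eq']
  norm_num

end IsTypeAChain

end TypeAChain

theorem stmt11 {V : Type*} [NormedAddCommGroup V] [InnerProductSpace ℝ V]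
    (α₁ α₂ αb₃ αb₄ β₁ β₂ β₃ β₄ : V)
    (h0 : ⟪β₄, β₄⟫ = 2)
    (h1 : ⟪α₁, α₁⟫ = 2)
    (h2 : ⟪β₁, β₁⟫ = 2)
    (h3 : ⟪α₂, α₂⟫ = 2)
    (h4 : ⟪β₃, β₃⟫ = 2)
    (h5 : ⟪αb₄, αb₄⟫ = 2)
    (h6 : ⟪β₄, α₁⟫ = -1)
    (h7 : ⟪α₁, β₁⟫ = -1)
    (h8 : ⟪β₁, α₂⟫ = -1)
    (h9 : ⟪α₂, β₃⟫ = -1)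
    (h10 : ⟪β₃, αb₄⟫ = -1)
    (h11 : ⟪β₄, β₁⟫ = 0)
    (h12 : ⟪β₄, α₂⟫ = 0)
    (h13 : ⟪β₄, β₃⟫ = 0)
    (h14 : ⟪β₄, αb₄⟫ = 0)
    (h15 : ⟪α₁, α₂⟫ = 0)
    (h16 : ⟪α₁, β₃⟫ = 0)
    (h17 : ⟪α₁, αb₄⟫ = 0)
    (h18 : ⟪β₁, β₃⟫ = 0)
    (h19 : ⟪β₁, αb₄⟫ = 0)
    (h20 : ⟪α₂, αb₄⟫ = 0)
    (h21 : ⟪β₃, αb₃⟫ + ⟪β₁, αb₃⟫ = 0)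
    (h22 : ⟪α₁, αb₃⟫ = 0)
    (h23 : ⟪α₂, αb₃⟫ = 0)
    (h24 : ⟪αb₄, αb₃⟫ = 0)
    (h25 : ⟪β₄, αb₃⟫ = 0)
    (h26 : ⟪αb₄, β₂⟫ + ⟪α₂, β₂⟫ = 0)
    (h27 : ⟪α₁, β₂⟫ = 0)
    (h28 : ⟪β₁, β₂⟫ = 0)
    (h29 : ⟪β₃, β₂⟫ = 0)
    (h30 : ⟪β₄, β₂⟫ = 0)
    (α₄ : V) (hdef : α₄ = -(αb₄ + β₃ + α₂ + β₁ + α₁ + β₄)) :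
    ⟪α₄, α₄⟫ = 2 ∧
    ⟪α₄, β₄⟫ = -1 ∧
    ⟪α₄, α₁⟫ = 0 ∧
    ⟪α₄, α₂⟫ = 0 ∧
    ⟪α₄, αb₃⟫ = 0 ∧
    ⟪α₄, β₁⟫ = 0 ∧
    ⟪α₄, β₂⟫ = 0 ∧
    ⟪α₄, β₃⟫ = 0 := by
  set v : Fin 6 → V := ![β₄, α₁, β₁, α₂, β₃, αb₄] with hv_def
  have hv : IsTypeAChain v := by
    refine ⟨fun i => ?_, fun i j hij => ?_⟩
    · fin_cases i <;> assumption
    · fin_cases i <;> fin_cases j <;> simp at hij <;> assumption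
  have hα₄ : α₄ = -∑ i, v i := by
    rw [hdef, Fin.sum_univ_six]
    simp only [hv_def, Matrix.cons_val]
    abel
  have hnode (i : Fin 6) :
      ⟪α₄, v i⟫ = -((if (i : ℕ) = 0 then 1 else 0) + if (i : ℕ) = 5 then 1 else 0) := by
    rw [hα₄, inner_neg_left, hv.inner_sum_left]
  have hoff (x : V) :
      ⟪α₄, x⟫ = -(⟪αb₄, x⟫ + ⟪β₃, x⟫ + ⟪α₂, x⟫ + ⟪β₁, x⟫ + ⟪α₁, x⟫ + ⟪β₄, x⟫) := by
    rw [hdef]; simp only [inner_neg_left, inner_add_left]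
  refine ⟨?_, by simpa [hv_def] using hnode 0, by simpa [hv_def] using hnode 1,
    by simpa [hv_def] using hnode 3, by rw [hoff]; linarith, by simpa [hv_def] using hnode 2,
    by rw [hoff]; linarith, by simpa [hv_def] using hnode 4⟩
  rw [hα₄, inner_neg_neg, hv.inner_sum_self]
end

section
/- Let V be a real inner product space and let α₁, α₂, ᾱ₃, ᾱ₄, β₁, β₂, β₃, β̄₄ ∈ V satisfy: ⟪α₁,α₁⟫ = ⟪β₁,β₁⟫ = ⟪α₂,α₂⟫ = ⟪β₃,β₃⟫ = ⟪ᾱ₄,ᾱ₄⟫ = ⟪β̄₄,β̄₄⟫ = 2; ⟪α₁,β₁⟫ = −1, ⟪β₁,α₂⟫ = −1, ⟪α₂,β₃⟫ = −1, ⟪β₃,ᾱ₄⟫ = −1, ⟪ᾱ₄,β̄₄⟫ = −1, and all other inner products among α₁, β₁, α₂, β₃, ᾱ₄, β̄₄ vanish; ⟪β₃,ᾱ₃⟫ + ⟪β₁,ᾱ₃⟫ = 0 and ⟪α₁,ᾱ₃⟫ = ⟪α₂,ᾱ₃⟫ = ⟪ᾱ₄,ᾱ₃⟫ = ⟪β̄₄,ᾱ₃⟫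 = 0; ⟪α₂,β₂⟫ + ⟪ᾱ₄,β₂⟫ = 0 and ⟪α₁,β₂⟫ = ⟪β₁,β₂⟫ = ⟪β₃,β₂⟫ = ⟪β̄₄,β₂⟫ = 0 (the relevant Gram relations of the Carter diagram E₈(a₅)). Set β₄ := −(β̄₄ + ᾱ₄ + β₃ + α₂ + β₁ + α₁). Then ⟪β₄,β₄⟫ = 2, ⟪β₄,α₁⟫ = −1, and β₄ is orthogonal to each of α₂, ᾱ₃, ᾱ₄, β₁, β₂, β₃ (the Gram relations of the Carter diagram E₈(a₄)). -/
/-!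
The roots α₁, β₁, α₂, β₃, ᾱ₄, β̄₄ form a chain of type A₆ and β₄ is minus the sum θ of this
chain. For simple roots γ₀, …, γₙ₋₁ of a chain, ⟪θ, γᵢ⟫ is the i-th row sum of the Cartan
matrix of Aₙ, which is 1 at the two end nodes and 0 at interior ones; summing over i gives
⟪θ, θ⟫ = 2. The relations with ᾱ₃ and β₂ are linear consequences of their Gram relations.
-/

open Finset
open scoped RealInnerProductSpace

/-- The Cartan matrix of type A, with nodes numbered 0, 1, 2, … along the chain. -/
def chainGram (i j : ℕ) : ℝ :=
  if i = j then 2 else if i + 1 = j ∨ j + 1 = i then -1 else 0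

theorem chainGram_eq_indicator (i j : ℕ) :
    chainGram i j =
      2 * (if i = j then 1 else 0) - (if i + 1 = j then 1 else 0) - (if i = j + 1 then 1 else 0) := by
  unfold chainGram
  split_ifs <;> norm_num <;> omega

theorem sum_range_chainGram {n i : ℕ} (hi : i < n) :
    ∑ j ∈ range n, chainGram j i = (if i = 0 then 1 else 0) + (if i = n - 1 then 1 else 0) := by
  have hleft : ∑ j ∈ range n, (if j + 1 = i then (1 : ℝ) else 0) = if i = 0 then 0 else 1 := by
    rcases i with _ | k
    · simp
    · simp only [add_left_inj, Nat.add_one_ne_zero, if_false]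
      rw [sum_ite_eq']
      simp only [mem_range, ite_eq_left_iff]
      omega
  simp_rw [chainGram_eq_indicator, sum_sub_distrib, ← mul_sum, sum_ite_eq', hleft, mem_range, if_pos hi]
  split_ifs <;> norm_num <;> omega

section SimpleRootChain

variable {V : Type*} [SeminormedAddCommGroup V] [InnerProductSpace ℝ V]

def IsSimpleRootChain {n : ℕ} (γ : Fin n → V) : Prop :=
  ∀ i j : Fin n, ⟪γ i, γ j⟫ = chainGram i j

namespace IsSimpleRootChain

variable {n : ℕ} {γ : Fin n → V}

theorem inner_sum_left (h : IsSimpleRootChain γ) (i : Fin n) :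
    ⟪∑ j, γ j, γ i⟫ = (if (i : ℕ) = 0 then 1 else 0) + (if (i : ℕ) = n - 1 then 1 else 0) := by
  rw [sum_inner, Fintype.sum_congr _ _ fun j => h j i,
    Fin.sum_univ_eq_sum_range (chainGram · i), sum_range_chainGram i.isLt]

theorem inner_sum_self (h : IsSimpleRootChain γ) (hn : 0 < n) :
    ⟪∑ j, γ j, ∑ j, γ j⟫ = 2 := by
  rw [inner_sum, Fintype.sum_congr _ _ h.inner_sum_left,
    Fin.sum_univ_eq_sum_range (fun i => (if i = 0 then (1 : ℝ) else 0) + if i = n - 1 then 1 else 0),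
    sum_add_distrib, sum_ite_eq', sum_ite_eq']
  simp only [mem_range]
  rw [if_pos hn, if_pos (by omega)]
  norm_num

end IsSimpleRootChain

end SimpleRootChain

theorem stmt12 {V : Type*} [NormedAddCommGroup V] [InnerProductSpace ℝ V]
    (α₁ α₂ αb₃ αb₄ β₁ β₂ β₃ βb₄ : V)
    (h0 : ⟪α₁, α₁⟫ = 2)
    (h1 : ⟪β₁, β₁⟫ = 2)
    (h2 : ⟪α₂, α₂⟫ = 2)
    (h3 : ⟪β₃, β₃⟫ = 2)
    (h4 : ⟪αb₄, αb₄⟫ = 2)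
    (h5 : ⟪βb₄, βb₄⟫ = 2)
    (h6 : ⟪α₁, β₁⟫ = -1)
    (h7 : ⟪β₁, α₂⟫ = -1)
    (h8 : ⟪α₂, β₃⟫ = -1)
    (h9 : ⟪β₃, αb₄⟫ = -1)
    (h10 : ⟪αb₄, βb₄⟫ = -1)
    (h11 : ⟪α₁, α₂⟫ = 0)
    (h12 : ⟪α₁, β₃⟫ = 0)
    (h13 : ⟪α₁, αb₄⟫ = 0)
    (h14 : ⟪α₁, βb₄⟫ = 0)
    (h15 : ⟪β₁, β₃⟫ = 0)
    (h16 : ⟪β₁, αb₄⟫ = 0)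
    (h17 : ⟪β₁, βb₄⟫ = 0)
    (h18 : ⟪α₂, αb₄⟫ = 0)
    (h19 : ⟪α₂, βb₄⟫ = 0)
    (h20 : ⟪β₃, βb₄⟫ = 0)
    (h21 : ⟪β₃, αb₃⟫ + ⟪β₁, αb₃⟫ = 0)
    (h22 : ⟪α₁, αb₃⟫ = 0)
    (h23 : ⟪α₂, αb₃⟫ = 0)
    (h24 : ⟪αb₄, αb₃⟫ = 0)
    (h25 : ⟪βb₄, αb₃⟫ = 0)
    (h26 : ⟪α₂, β₂⟫ + ⟪αb₄, β₂⟫ = 0)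
    (h27 : ⟪α₁, β₂⟫ = 0)
    (h28 : ⟪β₁, β₂⟫ = 0)
    (h29 : ⟪β₃, β₂⟫ = 0)
    (h30 : ⟪βb₄, β₂⟫ = 0)
    (β₄ : V) (hdef : β₄ = -(βb₄ + αb₄ + β₃ + α₂ + β₁ + α₁)) :
    ⟪β₄, β₄⟫ = 2 ∧
    ⟪β₄, α₁⟫ = -1 ∧
    ⟪β₄, α₂⟫ = 0 ∧
    ⟪β₄, αb₃⟫ = 0 ∧
    ⟪β₄, αb₄⟫ = 0 ∧
    ⟪β₄, β₁⟫ = 0 ∧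
    ⟪β₄, β₂⟫ = 0 ∧
    ⟪β₄, β₃⟫ = 0 := by
  set γ : Fin 6 → V := ![α₁, β₁, α₂, β₃, αb₄, βb₄]
  have hγ : IsSimpleRootChain γ := by
    intro i j
    fin_cases i <;> fin_cases j <;> norm_num [γ, chainGram, -inner_self_eq_norm_sq_to_K] <;>
      first | assumption | (rw [real_inner_comm]; assumption)
  set θ := ∑ i, γ i
  have hθ : θ = α₁ + β₁ + α₂ + β₃ + αb₄ + βb₄ := Fin.sum_univ_six γ
  have inner_θ (x : V) : ⟪θ, x⟫ = ⟪α₁, x⟫ + ⟪β₁, x⟫ + ⟪α₂, x⟫ + ⟪β₃, x⟫ + ⟪αb₄, x⟫ + ⟪βb₄, x⟫ := by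
    simp only [hθ, inner_add_left]
  have hβ₄ : β₄ = -θ := by
    rw [hdef, hθ]
    abel
  have end_node : ⟪θ, α₁⟫ = 1 := by simpa [γ] using hγ.inner_sum_left 0
  have interior_node (i : Fin 6) (hi₀ : (i : ℕ) ≠ 0) (hi₅ : (i : ℕ) ≠ 5) : ⟪θ, γ i⟫ = 0 := by
    simpa [hi₀, hi₅] using hγ.inner_sum_left i
  subst hβ₄
  simp only [inner_neg_left, inner_neg_right, neg_neg, neg_eq_zero]
  refine ⟨hγ.inner_sum_self (by norm_num), by rw [end_node], interior_node 2 (by decide) (by decide),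
    by rw [inner_θ]; linarith, interior_node 4 (by decide) (by decide),
    interior_node 1 (by decide) (by decide), by rw [inner_θ]; linarith,
    interior_node 3 (by decide) (by decide)⟩
end

section
/- Let V be a real inner product space and let α₁, α₂, ᾱ₃, ᾱ₄, β₁, β₂, β₃, β̄₄ ∈ V satisfy: ⟪β̄₄,β̄₄⟫ = ⟪α₁,α₁⟫ = ⟪β₁,β₁⟫ = ⟪α₂,α₂⟫ = ⟪β₂,β₂⟫ = ⟪β₃,β₃⟫ = 2; ⟪β̄₄,α₁⟫ = −1, ⟪α₁,β₁⟫ = −1, ⟪β₁,α₂⟫ = −1, ⟪α₂,β₂⟫ = −1, ⟪α₂,β₃⟫ = −1, and all other inner products among β̄₄, α₁, β₁, α₂, β₂, β₃ vanish; ⟪β̄₄,ᾱ₃⟫ = −1, ⟪β₁,ᾱ₃⟫ = 1, ⟪β₃,ᾱ₃⟫ = −1, ⟪β₂,ᾱ₃⟫ = 0, ⟪α₁,ᾱ₃⟫ = ⟪α₂,ᾱ₃⟫ = 0; ⟪β₂,ᾱ₄⟫ + ⟪β₃,ᾱ₄⟫ = 0 and ⟪β̄₄,ᾱ₄⟫ =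 ⟪β₁,ᾱ₄⟫ = ⟪α₁,ᾱ₄⟫ = ⟪α₂,ᾱ₄⟫ = 0 (the relevant Gram relations of the Carter diagram E₈(a₆)). Set β₄ := −(β̄₄ + 2α₁ + 2β₁ + 2α₂ + β₂ + β₃). Then ⟪β₄,β₄⟫ = 2, ⟪β₄,α₁⟫ = −1, and β₄ is orthogonal to each of α₂, ᾱ₃, ᾱ₄, β₁, β₂, β₃ (the Gram relations of the Carter diagram E₈(a₄)). -/
open scoped RealInnerProductSpace

/-!
The vector `θ = β̄₄ + 2α₁ + 2β₁ + 2α₂ + β₂ + β₃` is the highest root of the `D₆`-subsystem, so it is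
orthogonal to all of its simple roots except `α₁`, with `⟪θ, α₁⟫ = 1`. Expanding `⟪θ, θ⟫` along the
coefficients of `θ` then gives `⟪θ, θ⟫ = 2 ⟪θ, α₁⟫ = 2`, and `β₄ = -θ`. The orthogonality to `ᾱ₃` and
`ᾱ₄` is the same linear expansion against the given Gram relations.
-/

section

variable {V : Type*} [NormedAddCommGroup V] [InnerProductSpace ℝ V]

/-- The highest root `a + 2b + 2c + 2d + e + f` of `D₆` for the chain `a – b – c – d` with fork
ends `e`, `f` at `d`. -/
def d6HighestRoot (a b c d e f : V) : V :=
  a + (2 : ℝ) • b + (2 : ℝ) • c + (2 : ℝ) • d + e + f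

theorem real_inner_d6HighestRoot_left (a b c d e f x : V) :
    ⟪d6HighestRoot a b c d e f, x⟫ =
      ⟪a, x⟫ + 2 * ⟪b, x⟫ + 2 * ⟪c, x⟫ + 2 * ⟪d, x⟫ + ⟪e, x⟫ + ⟪f, x⟫ := by
  simp only [d6HighestRoot, inner_add_left, real_inner_smul_left]

theorem real_inner_d6HighestRoot_right (a b c d e f x : V) :
    ⟪x, d6HighestRoot a b c d e f⟫ =
      ⟪x, a⟫ + 2 * ⟪x, b⟫ + 2 * ⟪x, c⟫ + 2 * ⟪x, d⟫ + ⟪x, e⟫ + ⟪x, f⟫ := by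
  simp only [d6HighestRoot, inner_add_right, real_inner_smul_right]

end

theorem stmt13 {V : Type*} [NormedAddCommGroup V] [InnerProductSpace ℝ V]
    (α₁ α₂ αb₃ αb₄ β₁ β₂ β₃ βb₄ : V)
    (h0 : ⟪βb₄, βb₄⟫ = 2)
    (h1 : ⟪α₁, α₁⟫ = 2)
    (h2 : ⟪β₁, β₁⟫ = 2)
    (h3 : ⟪α₂, α₂⟫ = 2)
    (h4 : ⟪β₂, β₂⟫ = 2)
    (h5 : ⟪β₃, β₃⟫ = 2)
    (h6 : ⟪βb₄, α₁⟫ = -1)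
    (h7 : ⟪α₁, β₁⟫ = -1)
    (h8 : ⟪β₁, α₂⟫ = -1)
    (h9 : ⟪α₂, β₂⟫ = -1)
    (h10 : ⟪α₂, β₃⟫ = -1)
    (h11 : ⟪βb₄, β₁⟫ = 0)
    (h12 : ⟪βb₄, α₂⟫ = 0)
    (h13 : ⟪βb₄, β₂⟫ = 0)
    (h14 : ⟪βb₄, β₃⟫ = 0)
    (h15 : ⟪α₁, α₂⟫ = 0)
    (h16 : ⟪α₁, β₂⟫ = 0)
    (h17 : ⟪α₁, β₃⟫ = 0)
    (h18 : ⟪β₁, β₂⟫ = 0)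
    (h19 : ⟪β₁, β₃⟫ = 0)
    (h20 : ⟪β₂, β₃⟫ = 0)
    (h21 : ⟪βb₄, αb₃⟫ = -1)
    (h22 : ⟪β₁, αb₃⟫ = 1)
    (h23 : ⟪β₃, αb₃⟫ = -1)
    (h24 : ⟪β₂, αb₃⟫ = 0)
    (h25 : ⟪α₁, αb₃⟫ = 0)
    (h26 : ⟪α₂, αb₃⟫ = 0)
    (h27 : ⟪β₂, αb₄⟫ + ⟪β₃, αb₄⟫ = 0)
    (h28 : ⟪βb₄, αb₄⟫ = 0)
    (h29 : ⟪β₁, αb₄⟫ = 0)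
    (h30 : ⟪α₁, αb₄⟫ = 0)
    (h31 : ⟪α₂, αb₄⟫ = 0)
    (β₄ : V) (hdef : β₄ = -(βb₄ + (2:ℝ) • α₁ + (2:ℝ) • β₁ + (2:ℝ) • α₂ + β₂ + β₃)) :
    ⟪β₄, β₄⟫ = 2 ∧
    ⟪β₄, α₁⟫ = -1 ∧
    ⟪β₄, α₂⟫ = 0 ∧
    ⟪β₄, αb₃⟫ = 0 ∧
    ⟪β₄, αb₄⟫ = 0 ∧
    ⟪β₄, β₁⟫ = 0 ∧
    ⟪β₄, β₂⟫ = 0 ∧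
    ⟪β₄, β₃⟫ = 0 := by
  set θ := d6HighestRoot βb₄ α₁ β₁ α₂ β₂ β₃
  have hβ₄ : β₄ = -θ := hdef
  have hβ₄_inner (x : V) : ⟪β₄, x⟫ = -⟪θ, x⟫ := by rw [hβ₄, inner_neg_left]
  have hθβb₄ : ⟪θ, βb₄⟫ = 0 := by
    rw [real_inner_d6HighestRoot_left]
    linarith [real_inner_comm βb₄ α₁, real_inner_comm βb₄ β₁, real_inner_comm βb₄ α₂,
      real_inner_comm βb₄ β₂, real_inner_comm βb₄ β₃]
  have hθα₁ : ⟪θ, α₁⟫ = 1 := by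
    rw [real_inner_d6HighestRoot_left]
    linarith [real_inner_comm α₁ β₁, real_inner_comm α₁ α₂, real_inner_comm α₁ β₂,
      real_inner_comm α₁ β₃]
  have hθβ₁ : ⟪θ, β₁⟫ = 0 := by
    rw [real_inner_d6HighestRoot_left]
    linarith [real_inner_comm β₁ α₂, real_inner_comm β₁ β₂, real_inner_comm β₁ β₃]
  have hθα₂ : ⟪θ, α₂⟫ = 0 := by
    rw [real_inner_d6HighestRoot_left]
    linarith [real_inner_comm α₂ β₂, real_inner_comm α₂ β₃]
  have hθβ₂ : ⟪θ, β₂⟫ = 0 := by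
    rw [real_inner_d6HighestRoot_left]
    linarith [real_inner_comm β₂ β₃]
  have hθβ₃ : ⟪θ, β₃⟫ = 0 := by
    rw [real_inner_d6HighestRoot_left]
    linarith
  have hθαb₃ : ⟪θ, αb₃⟫ = 0 := by
    rw [real_inner_d6HighestRoot_left]
    linarith
  have hθαb₄ : ⟪θ, αb₄⟫ = 0 := by
    rw [real_inner_d6HighestRoot_left]
    linarith
  have hθθ : ⟪θ, θ⟫ = 2 := by
    rw [real_inner_d6HighestRoot_right, hθβb₄, hθα₁, hθβ₁, hθα₂, hθβ₂, hθβ₃]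
    norm_num
  refine ⟨by rw [hβ₄, inner_neg_neg, hθθ], ?_⟩
  simp only [hβ₄_inner, hθα₁, hθα₂, hθαb₃, hθαb₄, hθβ₁, hθβ₂, hθβ₃, neg_zero, and_self]
end

section
/- Let V be a real inner product space and let ᾱ₁, α₂, ᾱ₃, ᾱ₄, β₁, β₂, β₃, β̄₄ ∈ V satisfy: ⟪β₁,β₁⟫ = ⟪ᾱ₁,ᾱ₁⟫ = ⟪α₂,α₂⟫ = ⟪ᾱ₃,ᾱ₃⟫ = 2; ⟪β₁,ᾱ₁⟫ = ⟪β₁,α₂⟫ = ⟪β₁,ᾱ₃⟫ = −1 and ⟪ᾱ₁,α₂⟫ = ⟪ᾱ₁,ᾱ₃⟫ = ⟪α₂,ᾱ₃⟫ = 0; each of β₁, ᾱ₁, α₂, ᾱ₃ is orthogonal to β̄₄; ⟪ᾱ₁,β₂⟫ + ⟪α₂,β₂⟫ = 0 and ⟪ᾱ₃,β₂⟫ = ⟪β₁,β₂⟫ = 0; ⟪α₂,β₃⟫ + ⟪ᾱ₃,β₃⟫ = 0 and ⟪ᾱ₁,β₃⟫ = ⟪β₁,β₃⟫ = 0; ⟪β₁,ᾱ₄⟫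 = 0 and ⟪ᾱ₁,ᾱ₄⟫ = ⟪α₂,ᾱ₄⟫ = ⟪ᾱ₃,ᾱ₄⟫ = 0 (the relevant Gram relations of the Carter diagram E₈(a₇)). Set α₁ := −(2β₁ + ᾱ₁ + α₂ + ᾱ₃). Then ⟪α₁,α₁⟫ = 2, ⟪α₁,β₁⟫ = −1, and α₁ is orthogonal to each of α₂, ᾱ₃, ᾱ₄, β₂, β₃, β̄₄ (the Gram relations of the Carter diagram E₈(a₅)). -/
/-! The new vector α₁ is the lowest root `-(2β₁ + ᾱ₁ + α₂ + ᾱ₃)` of the D₄-subsystem with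
center β₁; adjoining it to the D₄ diagram gives the affine diagram D̃₄, so α₁ is orthogonal to
the three leaves and has inner product `-1` with the center, and `⟪α₁, α₁⟫ = 2` follows by
expanding it against these. Every other relation is linear: a vector orthogonal to the highest
root `2β₁ + ᾱ₁ + α₂ + ᾱ₃` is orthogonal to α₁. -/

open scoped RealInnerProductSpace

section D4

variable {V : Type*} [NormedAddCommGroup V] [InnerProductSpace ℝ V]

/-- The negative of the highest root `2β + a₁ + a₂ + a₃` of the D₄ system with center `β`. -/
def d4MinimalRoot (β a₁ a₂ a₃ : V) : V := -((2 : ℝ) • β + a₁ + a₂ + a₃)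

lemma inner_d4MinimalRoot_left (β a₁ a₂ a₃ x : V) :
    ⟪d4MinimalRoot β a₁ a₂ a₃, x⟫ = -(2 * ⟪β, x⟫ + ⟪a₁, x⟫ + ⟪a₂, x⟫ + ⟪a₃, x⟫) := by
  simp only [d4MinimalRoot, inner_neg_left, inner_add_left, real_inner_smul_left]

lemma inner_d4MinimalRoot_left_eq_zero {β a₁ a₂ a₃ x : V}
    (h : 2 * ⟪β, x⟫ + ⟪a₁, x⟫ + ⟪a₂, x⟫ + ⟪a₃, x⟫ = 0) :
    ⟪d4MinimalRoot β a₁ a₂ a₃, x⟫ = 0 := by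
  rw [inner_d4MinimalRoot_left, h, neg_zero]

/-- Gram relations of the simple roots of D₄ with center `β` and leaves `a₁, a₂, a₃`. -/
structure IsD4Star (β a₁ a₂ a₃ : V) : Prop where
  center_norm : ⟪β, β⟫ = 2
  leaf₁_norm : ⟪a₁, a₁⟫ = 2
  leaf₂_norm : ⟪a₂, a₂⟫ = 2
  leaf₃_norm : ⟪a₃, a₃⟫ = 2
  center_leaf₁ : ⟪β, a₁⟫ = -1
  center_leaf₂ : ⟪β, a₂⟫ = -1
  center_leaf₃ : ⟪β, a₃⟫ = -1
  leaf₁_leaf₂ : ⟪a₁, a₂⟫ = 0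
  leaf₁_leaf₃ : ⟪a₁, a₃⟫ = 0
  leaf₂_leaf₃ : ⟪a₂, a₃⟫ = 0

namespace IsD4Star

variable {β a₁ a₂ a₃ : V} (h : IsD4Star β a₁ a₂ a₃)
include h

lemma inner_minimalRoot_center : ⟪d4MinimalRoot β a₁ a₂ a₃, β⟫ = -1 := by
  rw [inner_d4MinimalRoot_left, real_inner_comm β a₁, real_inner_comm β a₂, real_inner_comm β a₃,
    h.center_norm, h.center_leaf₁, h.center_leaf₂, h.center_leaf₃]
  norm_num

lemma inner_minimalRoot_leaf₁ : ⟪d4MinimalRoot β a₁ a₂ a₃, a₁⟫ = 0 := by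
  apply inner_d4MinimalRoot_left_eq_zero
  rw [real_inner_comm a₁ a₂, real_inner_comm a₁ a₃, h.center_leaf₁, h.leaf₁_norm,
    h.leaf₁_leaf₂, h.leaf₁_leaf₃]
  norm_num

lemma inner_minimalRoot_leaf₂ : ⟪d4MinimalRoot β a₁ a₂ a₃, a₂⟫ = 0 := by
  apply inner_d4MinimalRoot_left_eq_zero
  rw [real_inner_comm a₂ a₃, h.center_leaf₂, h.leaf₁_leaf₂, h.leaf₂_norm, h.leaf₂_leaf₃]
  norm_num

lemma inner_minimalRoot_leaf₃ : ⟪d4MinimalRoot β a₁ a₂ a₃, a₃⟫ = 0 := by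
  apply inner_d4MinimalRoot_left_eq_zero
  rw [h.center_leaf₃, h.leaf₁_leaf₃, h.leaf₂_leaf₃, h.leaf₃_norm]
  norm_num

lemma inner_minimalRoot_self : ⟪d4MinimalRoot β a₁ a₂ a₃, d4MinimalRoot β a₁ a₂ a₃⟫ = 2 := by
  conv_lhs => rw [inner_d4MinimalRoot_left]
  rw [real_inner_comm _ β, real_inner_comm _ a₁, real_inner_comm _ a₂, real_inner_comm _ a₃,
    h.inner_minimalRoot_center, h.inner_minimalRoot_leaf₁, h.inner_minimalRoot_leaf₂,
    h.inner_minimalRoot_leaf₃]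
  norm_num

end IsD4Star

end D4

theorem stmt14 {V : Type*} [NormedAddCommGroup V] [InnerProductSpace ℝ V]
    (αb₁ α₂ αb₃ αb₄ β₁ β₂ β₃ βb₄ : V)
    (h0 : ⟪β₁, β₁⟫ = 2)
    (h1 : ⟪αb₁, αb₁⟫ = 2)
    (h2 : ⟪α₂, α₂⟫ = 2)
    (h3 : ⟪αb₃, αb₃⟫ = 2)
    (h4 : ⟪β₁, αb₁⟫ = -1)
    (h5 : ⟪β₁, α₂⟫ = -1)
    (h6 : ⟪β₁, αb₃⟫ = -1)
    (h7 : ⟪αb₁, α₂⟫ = 0)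
    (h8 : ⟪αb₁, αb₃⟫ = 0)
    (h9 : ⟪α₂, αb₃⟫ = 0)
    (h10 : ⟪β₁, βb₄⟫ = 0)
    (h11 : ⟪αb₁, βb₄⟫ = 0)
    (h12 : ⟪α₂, βb₄⟫ = 0)
    (h13 : ⟪αb₃, βb₄⟫ = 0)
    (h14 : ⟪αb₁, β₂⟫ + ⟪α₂, β₂⟫ = 0)
    (h15 : ⟪αb₃, β₂⟫ = 0)
    (h16 : ⟪β₁, β₂⟫ = 0)
    (h17 : ⟪α₂, β₃⟫ + ⟪αb₃, β₃⟫ = 0)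
    (h18 : ⟪αb₁, β₃⟫ = 0)
    (h19 : ⟪β₁, β₃⟫ = 0)
    (h20 : ⟪β₁, αb₄⟫ = 0)
    (h21 : ⟪αb₁, αb₄⟫ = 0)
    (h22 : ⟪α₂, αb₄⟫ = 0)
    (h23 : ⟪αb₃, αb₄⟫ = 0)
    (α₁ : V) (hdef : α₁ = -((2:ℝ) • β₁ + αb₁ + α₂ + αb₃)) :
    ⟪α₁, α₁⟫ = 2 ∧
    ⟪α₁, β₁⟫ = -1 ∧
    ⟪α₁, α₂⟫ = 0 ∧
    ⟪α₁, αb₃⟫ = 0 ∧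
    ⟪α₁, αb₄⟫ = 0 ∧
    ⟪α₁, β₂⟫ = 0 ∧
    ⟪α₁, β₃⟫ = 0 ∧
    ⟪α₁, βb₄⟫ = 0 := by
  have hD4 : IsD4Star β₁ αb₁ α₂ αb₃ := ⟨h0, h1, h2, h3, h4, h5, h6, h7, h8, h9⟩
  obtain rfl : α₁ = d4MinimalRoot β₁ αb₁ α₂ αb₃ := hdef
  refine ⟨hD4.inner_minimalRoot_self, hD4.inner_minimalRoot_center,
    hD4.inner_minimalRoot_leaf₂, hD4.inner_minimalRoot_leaf₃, ?_, ?_, ?_, ?_⟩ <;>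
  exact inner_d4MinimalRoot_left_eq_zero (by linarith)
end

section
/- Let V be a real inner product space and let α₁, β₁, α₂, β₂ ∈ V satisfy ⟪α₁,α₁⟫ = ⟪β₁,β₁⟫ = ⟪β₂,β₂⟫ = ⟪α₂,α₂⟫ = 2, ⟪α₁,β₁⟫ = −1, and ⟪α₁ + β₁, β₂⟫ = −1. For any γ ∈ V with ⟪γ,γ⟫ = 2 let s_γ : V → V denote the reflection s_γ(x) = x − ⟪x,γ⟫ γ. Then s_{α₁+β₁} ∘ (s_{α₁} ∘ s_{β₁} ∘ s_{α₂} ∘ s_{β₂}) ∘ s_{α₁+β₁} = s_{α₁} ∘ s_{α₂} ∘ s_{α₁+β₁+β₂} ∘ s_{β₂}; in particular, the element w_o = s_{α₁} s_{β₁} s_{α₂} s_{β₂} is conjugate to w_õ = s_{α₁} s_{α₂} s_{α₁+β₁+β₂} s_{β₂} (note s_{α₁+β₁+β₂} = s_{−(α₁+β₁+β₂)}). -/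
/-!
Since `s_γ` is an isometric involution when `⟪γ, γ⟫ = 2`, we have `s_γ s_δ = s_{s_γ δ} s_γ`, and
`s_γ δ = γ + δ` when `⟪δ, γ⟫ = -1`. This gives `s_{α₁} s_{β₁} = s_{α₁+β₁} s_{α₁}` and
`s_{β₂} s_{α₁+β₁} = s_{α₁+β₁+β₂} s_{β₂}`. By the first, `s_{α₁+β₁} s_{α₁} s_{β₁} = s_{α₁}`
(as `s_{α₁+β₁}² = 1`); the second moves the right-hand `s_{α₁+β₁}` past `s_{β₂}`.
-/

open scoped RealInnerProductSpace

section RootReflection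

variable {V : Type*} [NormedAddCommGroup V] [InnerProductSpace ℝ V]

/-- For `⟪γ, γ⟫ = 2` this is the orthogonal reflection in the hyperplane `γᗮ`. -/
def rootReflection (γ x : V) : V := x - ⟪x, γ⟫ • γ

theorem rootReflection_apply (γ x : V) : rootReflection γ x = x - ⟪x, γ⟫ • γ := rfl

theorem rootReflection_rootReflection_self {γ : V} (hγ : ⟪γ, γ⟫ = 2) (x : V) :
    rootReflection γ (rootReflection γ x) = x := by
  simp only [rootReflection, inner_sub_left, real_inner_smul_left, hγ]
  module

theorem inner_rootReflection_rootReflection {γ : V} (hγ : ⟪γ, γ⟫ = 2) (x y : V) :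
    ⟪rootReflection γ x, rootReflection γ y⟫ = ⟪x, y⟫ := by
  simp only [rootReflection, inner_sub_left, inner_sub_right, real_inner_smul_left,
    real_inner_smul_right, hγ, real_inner_comm γ]
  ring

theorem rootReflection_rootReflection {γ : V} (hγ : ⟪γ, γ⟫ = 2) (δ x : V) :
    rootReflection γ (rootReflection δ x) =
      rootReflection (rootReflection γ δ) (rootReflection γ x) := by
  have hlin : rootReflection γ (x - ⟪x, δ⟫ • δ) =
      rootReflection γ x - ⟪x, δ⟫ • rootReflection γ δ := by
    simp only [rootReflection, inner_sub_left, real_inner_smul_left]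
    module
  rw [rootReflection_apply δ x, hlin, rootReflection_apply _ (rootReflection γ x),
    inner_rootReflection_rootReflection hγ]

theorem rootReflection_rootReflection_of_inner_eq_neg_one {γ δ : V} (hγ : ⟪γ, γ⟫ = 2)
    (hδγ : ⟪δ, γ⟫ = -1) (x : V) :
    rootReflection γ (rootReflection δ x) =
      rootReflection (δ + γ) (rootReflection γ x) := by
  rw [rootReflection_rootReflection hγ, rootReflection_apply γ δ, hδγ, neg_one_smul,
    sub_neg_eq_add]

end RootReflection

theorem stmt19_general {V : Type*} [NormedAddCommGroup V] [InnerProductSpace ℝ V]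
    (α₁ β₁ α₂ β₂ : V)
    (s : V → V → V) (hs : ∀ γ x, s γ x = x - ⟪x, γ⟫ • γ)
    (h1 : ⟪α₁, α₁⟫ = 2) (h2 : ⟪β₁, β₁⟫ = 2) (h3 : ⟪β₂, β₂⟫ = 2)
    (h5 : ⟪α₁, β₁⟫ = -1) (h6 : ⟪α₁ + β₁, β₂⟫ = -1) :
    s (α₁ + β₁) ∘ (s α₁ ∘ s β₁ ∘ s α₂ ∘ s β₂) ∘ s (α₁ + β₁) =
      s α₁ ∘ s α₂ ∘ s (α₁ + β₁ + β₂) ∘ s β₂ := by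
  obtain rfl : s = rootReflection := funext₂ hs
  have hβ₁α₁ : ⟪β₁, α₁⟫ = -1 := by rw [real_inner_comm, h5]
  have hsum : ⟪α₁ + β₁, α₁ + β₁⟫ = 2 := by
    rw [real_inner_add_add_self, h1, h2, h5]; norm_num
  funext x
  simp only [Function.comp_apply]
  rw [rootReflection_rootReflection_of_inner_eq_neg_one h1 hβ₁α₁,
    rootReflection_rootReflection_of_inner_eq_neg_one h3 h6, add_comm β₁ α₁,
    rootReflection_rootReflection_self hsum]

theorem stmt19 {V : Type*} [NormedAddCommGroup V] [InnerProductSpace ℝ V]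
    (α₁ β₁ α₂ β₂ : V)
    (s : V → V → V) (hs : ∀ γ x, s γ x = x - ⟪x, γ⟫ • γ)
    (h1 : ⟪α₁, α₁⟫ = 2) (h2 : ⟪β₁, β₁⟫ = 2) (h3 : ⟪β₂, β₂⟫ = 2) (h4 : ⟪α₂, α₂⟫ = 2)
    (h5 : ⟪α₁, β₁⟫ = -1) (h6 : ⟪α₁ + β₁, β₂⟫ = -1) :
    s (α₁ + β₁) ∘ (s α₁ ∘ s β₁ ∘ s α₂ ∘ s β₂) ∘ s (α₁ + β₁) =
      s α₁ ∘ s α₂ ∘ s (α₁ + β₁ + β₂) ∘ s β₂ :=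
  stmt19_general α₁ β₁ α₂ β₂ s hs h1 h2 h3 h5 h6
end
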